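/- arXiv:1307.5425 — 7 statements merged into one kernel-verified Lean document; each statement's English description precedes it below -/
import Mathlib

section
/- There exists an absolute constant c > 0 with the following property. For every l ≥ 1, set α := √(2π/l), β := √(l/(2π)) and Λ_l := αℤ × βℤ ⊆ ℝ², and let G : ℝ² \ Λ_l → ℝ be any smooth Λ_l-periodic function such that ΔG = −1 on ℝ² \ Λ_l and such that x ↦ G(x) − (1/(2π))·ln|x| is bounded on a punctured neighbourhood of 0 (i.e. G is a Green function of the unit-area flat rectangular torus ℝ²/Λ_l with pole at 0). Then sup_{t>0} t² · m({x ∈ (0,α)×(0,β) : ‖∇G(x)‖ ≥ t}) ≥ c·l. In particular, the weak-L² quasinorm of the gradient of the Green function, computed with respect to the intrinsic flat metric of the degenerating unit-area torus, tends to infinity as l → ∞. -/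
open MeasureTheory Real
open Set

/-- Euclidean Laplacian of a function on `ℝ × ℝ`. -/
noncomputable def lap2 (f : ℝ × ℝ → ℝ) (p : ℝ × ℝ) : ℝ :=
  iteratedFDeriv ℝ 2 f p ![(1, 0), (1, 0)] + iteratedFDeriv ℝ 2 f p ![(0, 1), (0, 1)]

/-- The lattice `Λ_l = √(2π/l) ℤ × √(l/(2π)) ℤ ⊆ ℝ²`. -/
def latticeL (l : ℝ) : Set (ℝ × ℝ) :=
  {p | ∃ m n : ℤ, p = ((m : ℝ) * Real.sqrt (2 * π / l), (n : ℝ) * Real.sqrt (l / (2 * π)))}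



lemma fderiv_shift (f : ℝ × ℝ → ℝ) (q x : ℝ × ℝ) :
    fderiv ℝ (fun y => f (y + q)) x = fderiv ℝ f (x + q) := by
  by_cases h : DifferentiableAt ℝ f (x + q)
  · have hc : HasFDerivAt (fun y : ℝ×ℝ => y + q) (ContinuousLinearMap.id ℝ (ℝ×ℝ)) x :=
      (hasFDerivAt_id x).add_const q
    have := (h.hasFDerivAt.comp x hc).fderiv
    simpa [Function.comp_def] using this
  · rw [fderiv_zero_of_not_differentiableAt h, fderiv_zero_of_not_differentiableAt]
    intro hd
    apply h
    have hc : HasFDerivAt (fun y : ℝ×ℝ => y - q) (ContinuousLinearMap.id ℝ (ℝ×ℝ)) (x + q) :=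
      (hasFDerivAt_id _).sub_const q
    have : DifferentiableAt ℝ (fun y => f (y + q)) (x + q - q) := by simpa using hd
    have := (this.comp (x + q) hc.differentiableAt)
    simpa [Function.comp_def] using this

lemma hasDerivAt_line_y {F : ℝ × ℝ → ℝ} {x y : ℝ} (hd : DifferentiableAt ℝ F (x, y)) :
    HasDerivAt (fun t => F (x, t)) (fderiv ℝ F (x, y) (0, 1)) y := by
  have hline : HasDerivAt (fun t : ℝ => ((x, t) : ℝ × ℝ)) (((0:ℝ), (1:ℝ)) : ℝ × ℝ) y :=
    HasDerivAt.prodMk (hasDerivAt_const y x) (hasDerivAt_id y)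
  exact hd.hasFDerivAt.comp_hasDerivAt y hline

lemma hasDerivAt_line_apply_y {f1 : ℝ × ℝ → (ℝ × ℝ →L[ℝ] ℝ)} {x y : ℝ}
    (hd : DifferentiableAt ℝ f1 (x, y)) (v : ℝ × ℝ) :
    HasDerivAt (fun t => f1 (x, t) v) (fderiv ℝ f1 (x, y) (0, 1) v) y := by
  have hline : HasDerivAt (fun t : ℝ => ((x, t) : ℝ × ℝ)) (((0:ℝ), (1:ℝ)) : ℝ × ℝ) y :=
    HasDerivAt.prodMk (hasDerivAt_const y x) (hasDerivAt_id y)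
  have h1 : HasDerivAt (fun t => f1 (x, t)) (fderiv ℝ f1 (x, y) (0, 1)) y :=
    hd.hasFDerivAt.comp_hasDerivAt y hline
  exact (ContinuousLinearMap.apply ℝ ℝ v).hasFDerivAt.comp_hasDerivAt y h1

lemma hasDerivAt_line_apply_x {f1 : ℝ × ℝ → (ℝ × ℝ →L[ℝ] ℝ)} {x y : ℝ}
    (hd : DifferentiableAt ℝ f1 (x, y)) (v : ℝ × ℝ) :
    HasDerivAt (fun t => f1 (t, y) v) (fderiv ℝ f1 (x, y) (1, 0) v) x := by
  have hline : HasDerivAt (fun t : ℝ => ((t, y) : ℝ × ℝ)) (((1:ℝ), (0:ℝ)) : ℝ × ℝ) x :=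
    HasDerivAt.prodMk (hasDerivAt_id x) (hasDerivAt_const x y)
  have h1 : HasDerivAt (fun t => f1 (t, y)) (fderiv ℝ f1 (x, y) (1, 0)) x :=
    hd.hasFDerivAt.comp_hasDerivAt x hline
  exact (ContinuousLinearMap.apply ℝ ℝ v).hasFDerivAt.comp_hasDerivAt x h1


lemma isClosed_mulrange {c : ℝ} (hc : c ≠ 0) : IsClosed {x : ℝ | ∃ m : ℤ, x = m * c} := by
  have : {x : ℝ | ∃ m : ℤ, x = m * c} = (fun x => x / c) ⁻¹' (Set.range (Int.cast : ℤ → ℝ)) := by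
    ext x
    simp only [Set.mem_setOf_eq, Set.mem_preimage, Set.mem_range]
    constructor
    · rintro ⟨m, rfl⟩; exact ⟨m, by field_simp⟩
    · rintro ⟨m, h⟩; exact ⟨m, by field_simp at h; linarith⟩
  rw [this]
  exact Int.isClosedEmbedding_coe_real.isClosed_range.preimage (continuous_id.div_const c)

lemma isClosed_latticeL {l : ℝ} (hl : 1 ≤ l) : IsClosed (latticeL l) := by
  have hl0 : 0 < l := lt_of_lt_of_le one_pos hl
  have ha : (0:ℝ) < Real.sqrt (2 * π / l) := Real.sqrt_pos.2 (by positivity)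
  have hb : (0:ℝ) < Real.sqrt (l / (2 * π)) := Real.sqrt_pos.2 (by positivity)
  have : latticeL l = {x : ℝ | ∃ m : ℤ, x = m * Real.sqrt (2 * π / l)} ×ˢ
      {x : ℝ | ∃ n : ℤ, x = n * Real.sqrt (l / (2 * π))} := by
    ext ⟨x, y⟩
    simp only [latticeL, Set.mem_setOf_eq, Set.mem_prod, Prod.mk.injEq, Prod.ext_iff]
    constructor
    · rintro ⟨m, n, h1, h2⟩; exact ⟨⟨m, h1⟩, ⟨n, h2⟩⟩
    · rintro ⟨⟨m, h1⟩, ⟨n, h2⟩⟩; exact ⟨m, n, h1, h2⟩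
  rw [this]
  exact (isClosed_mulrange ha.ne').prod (isClosed_mulrange hb.ne')

section core
variable {l : ℝ} {G : ℝ × ℝ → ℝ}

-- membership of strip avoids lattice
lemma strip_not_lattice (hl : 1 ≤ l) {p : ℝ × ℝ} (hp : 0 < p.2 ∧ p.2 < Real.sqrt (l / (2 * π))) :
    p ∉ latticeL l := by
  have hl0 : 0 < l := lt_of_lt_of_le one_pos hl
  have hb : (0:ℝ) < Real.sqrt (l / (2 * π)) := Real.sqrt_pos.2 (by positivity)
  rintro ⟨m, n, rfl⟩
  simp only at hp
  obtain ⟨h1, h2⟩ := hp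
  have hn0 : (0:ℝ) < (n:ℝ) := by nlinarith
  have hn1 : (n:ℝ) < 1 := by
    by_contra h
    push_neg at h
    nlinarith
  have : (0:ℤ) < n := by exact_mod_cast hn0
  have : (n:ℤ) < 1 := by exact_mod_cast hn1
  omega

end core

section core2
variable {l : ℝ} {G : ℝ × ℝ → ℝ}

lemma hasDerivAt_phi (hl : 1 ≤ l)
    (hsm : ContDiffOn ℝ (⊤ : ℕ∞) G {p : ℝ × ℝ | p ∉ latticeL l})
    (hper : ∀ p : ℝ × ℝ, ∀ q ∈ latticeL l, G (p + q) = G p)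
    (hlap : ∀ p : ℝ × ℝ, p ∉ latticeL l → lap2 G p = -1)
    {y₀ : ℝ} (hy₀ : y₀ ∈ Ioo 0 (Real.sqrt (l / (2 * π)))) :
    HasDerivAt (fun y => ∫ x in Ioo 0 (Real.sqrt (2 * π / l)), fderiv ℝ G (x, y) (0, 1))
      (-(Real.sqrt (2 * π / l))) y₀ := by
  have hl0 : 0 < l := lt_of_lt_of_le one_pos hl
  set a := Real.sqrt (2 * π / l) with ha_def
  set b := Real.sqrt (l / (2 * π)) with hb_def
  have ha : 0 < a := Real.sqrt_pos.2 (by positivity)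
  have hb : 0 < b := Real.sqrt_pos.2 (by positivity)
  obtain ⟨hy₀0, hy₀b⟩ := hy₀
  -- the open set where G is smooth
  set V : Set (ℝ × ℝ) := {p : ℝ × ℝ | p ∉ latticeL l} with hV_def
  have hVopen : IsOpen V := by
    have : V = (latticeL l)ᶜ := rfl
    rw [this]
    exact (isClosed_latticeL hl).isOpen_compl
  have hUV : ∀ p : ℝ × ℝ, 0 < p.2 → p.2 < b → p ∈ V := fun p h1 h2 =>
    strip_not_lattice hl ⟨h1, h2⟩
  set f1 : ℝ × ℝ → (ℝ × ℝ →L[ℝ] ℝ) := fderiv ℝ G with hf1_def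
  have hG1 : ContDiffOn ℝ (⊤ : ℕ∞) f1 V := hsm.fderiv_of_isOpen hVopen (by simp)
  have hf1cont : ContinuousOn f1 V := hG1.continuousOn
  have hf2cont : ContinuousOn (fderiv ℝ f1) V := hG1.continuousOn_fderiv_of_isOpen hVopen (by simp)
  have hf1diff : ∀ p ∈ V, DifferentiableAt ℝ f1 p := fun p hp =>
    (hG1.contDiffAt (hVopen.mem_nhds hp)).differentiableAt (by simp)
  -- the second-derivative integrand
  set g2 : ℝ × ℝ → ℝ := fun p => fderiv ℝ f1 p (0, 1) (0, 1) with hg2_def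
  set g2x : ℝ × ℝ → ℝ := fun p => fderiv ℝ f1 p (1, 0) (1, 0) with hg2x_def
  have hg2cont : ContinuousOn g2 V := by
    apply ContinuousOn.clm_apply _ continuousOn_const
    exact ContinuousOn.clm_apply hf2cont continuousOn_const
  have hg2xcont : ContinuousOn g2x V := by
    apply ContinuousOn.clm_apply _ continuousOn_const
    exact ContinuousOn.clm_apply hf2cont continuousOn_const
  -- ball inside strip
  set δ := min y₀ (b - y₀) / 2 with hδ_def
  have hδ : 0 < δ := by
    have h1 : 0 < min y₀ (b - y₀) := lt_min hy₀0 (by linarith)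
    positivity
  have hδ1 : δ ≤ y₀ / 2 := by
    have := min_le_left y₀ (b - y₀); simp only [hδ_def]; linarith
  have hδ2 : δ ≤ (b - y₀) / 2 := by
    have := min_le_right y₀ (b - y₀); simp only [hδ_def]; linarith
  have hball : ∀ y ∈ Metric.ball y₀ δ, 0 < y ∧ y < b := by
    intro y hy
    rw [Metric.mem_ball, Real.dist_eq, abs_lt] at hy
    constructor <;> linarith [hy.1, hy.2]
  -- compact set and bound
  set K : Set (ℝ × ℝ) := Icc 0 a ×ˢ Icc (y₀ - δ) (y₀ + δ) with hK_def
  have hKV : K ⊆ V := by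
    rintro ⟨x, y⟩ ⟨hx, hy⟩
    exact hUV (x, y) (by simp only; cases hy; linarith) (by simp only; cases hy; linarith)
  have hKc : IsCompact K := isCompact_Icc.prod isCompact_Icc
  obtain ⟨C, hC⟩ := hKc.exists_bound_of_continuousOn (hg2cont.mono hKV)
  -- slices are continuous
  have hslice : ∀ (h : ℝ × ℝ → ℝ), ContinuousOn h V → ∀ y, 0 < y → y < b →
      ContinuousOn (fun x => h (x, y)) (Icc 0 a) := by
    intro h hh y h1 h2
    apply hh.comp ((continuous_id.prodMk continuous_const).continuousOn)
    intro x _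
    exact hUV (x, y) h1 h2
  have hf1slice := hslice (fun p => f1 p (0, 1))
    (ContinuousOn.clm_apply hf1cont continuousOn_const)
  have hg2slice := hslice g2 hg2cont
  have hg2xslice := hslice g2x hg2xcont
  -- differentiation under the integral sign
  have main := hasDerivAt_integral_of_dominated_loc_of_deriv_le (μ := volume.restrict (Ioo 0 a))
    (F := fun y x => f1 (x, y) (0, 1)) (F' := fun y x => g2 (x, y)) (x₀ := y₀)
    (bound := fun _ => C) (Metric.ball_mem_nhds y₀ hδ) ?_ ?_ ?_ ?_ ?_ ?_
  · -- now identify the value of the derivative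
    have hval : ∫ x in Ioo 0 a, g2 (x, y₀) = -a := by
      have hpt : ∀ x : ℝ, g2 (x, y₀) = -1 - g2x (x, y₀) := by
        intro x
        have hmem : (x, y₀) ∈ V := hUV (x, y₀) hy₀0 hy₀b
        have := hlap (x, y₀) hmem
        rw [lap2, iteratedFDeriv_two_apply, iteratedFDeriv_two_apply] at this
        simp only [Matrix.cons_val_zero, Matrix.cons_val_one, Matrix.head_cons] at this
        simp only [hg2_def, hg2x_def, hf1_def]
        linarith
      have hint_g2x : IntegrableOn (fun x => g2x (x, y₀)) (Ioo 0 a) :=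
        ((hg2xslice y₀ hy₀0 hy₀b).integrableOn_Icc).mono_set Ioo_subset_Icc_self
      calc ∫ x in Ioo 0 a, g2 (x, y₀) = ∫ x in Ioo 0 a, (-1 - g2x (x, y₀)) := by
            apply setIntegral_congr_fun measurableSet_Ioo
            intro x _; exact hpt x
        _ = (∫ _x in Ioo 0 a, (-1 : ℝ)) - ∫ x in Ioo 0 a, g2x (x, y₀) :=
            integral_sub (integrableOn_const (by rw [Real.volume_Ioo]; exact ENNReal.ofReal_ne_top)) hint_g2x
        _ = -a - ∫ x in Ioo 0 a, g2x (x, y₀) := by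
            rw [setIntegral_const]
            rw [measureReal_def, Real.volume_Ioo, ENNReal.toReal_ofReal (by linarith), smul_eq_mul]
            ring
        _ = -a := by
            have hftc : ∫ x in (0:ℝ)..a, g2x (x, y₀) =
                f1 (a, y₀) (1, 0) - f1 (0, y₀) (1, 0) := by
              apply intervalIntegral.integral_eq_sub_of_hasDerivAt (f := fun x => f1 (x, y₀) (1, 0))
              · intro x hx
                exact hasDerivAt_line_apply_x (hf1diff (x, y₀) (hUV (x, y₀) hy₀0 hy₀b)) (1, 0)
              · apply ContinuousOn.intervalIntegrable
                rw [uIcc_of_le ha.le]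
                exact hg2xslice y₀ hy₀0 hy₀b
            have hper' : f1 (a, y₀) = f1 (0, y₀) := by
              have hq : ((a, 0) : ℝ × ℝ) ∈ latticeL l := ⟨1, 0, by simp [ha_def]⟩
              have hGshift : (fun p : ℝ × ℝ => G (p + (a, 0))) = G :=
                funext fun p => hper p (a, 0) hq
              have := fderiv_shift G (a, 0) (0, y₀)
              rw [hGshift] at this
              simp only [hf1_def]
              rw [this]
              norm_num [Prod.ext_iff]
            rw [intervalIntegral.integral_of_le ha.le, integral_Ioc_eq_integral_Ioo] at hftc
            rw [hftc, hper']
            ring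
    rw [hval] at main
    exact main.2
  · -- measurability of F y for y near y₀
    filter_upwards [Metric.ball_mem_nhds y₀ hδ] with y hy
    obtain ⟨h1, h2⟩ := hball y hy
    exact ((hf1slice y h1 h2).mono Ioo_subset_Icc_self).aestronglyMeasurable measurableSet_Ioo
  · exact ((hf1slice y₀ hy₀0 hy₀b).integrableOn_Icc).mono_set Ioo_subset_Icc_self
  · exact ((hg2slice y₀ hy₀0 hy₀b).mono Ioo_subset_Icc_self).aestronglyMeasurable measurableSet_Ioo
  · -- bound
    rw [ae_restrict_iff' measurableSet_Ioo]
    apply ae_of_all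
    intro x hx y hy
    rw [Metric.mem_ball, Real.dist_eq, abs_lt] at hy
    have : (x, y) ∈ K := by
      constructor
      · exact ⟨hx.1.le, hx.2.le⟩
      · constructor <;> simp only <;> linarith [hy.1, hy.2]
    exact hC _ this
  · exact integrable_const C
  · -- differentiability in y
    rw [ae_restrict_iff' measurableSet_Ioo]
    apply ae_of_all
    intro x hx y hy
    obtain ⟨h1, h2⟩ := hball y hy
    exact hasDerivAt_line_apply_y (hf1diff (x, y) (hUV (x, y) h1 h2)) (0, 1)


end core2

lemma phi_slope (hl : 1 ≤ l)
    (hsm : ContDiffOn ℝ (⊤ : ℕ∞) G {p : ℝ × ℝ | p ∉ latticeL l})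
    (hper : ∀ p : ℝ × ℝ, ∀ q ∈ latticeL l, G (p + q) = G p)
    (hlap : ∀ p : ℝ × ℝ, p ∉ latticeL l → lap2 G p = -1)
    {y₁ y₂ : ℝ} (h₁ : y₁ ∈ Ioo 0 (Real.sqrt (l / (2 * π))))
    (h₂ : y₂ ∈ Ioo 0 (Real.sqrt (l / (2 * π)))) :
    (∫ x in Ioo 0 (Real.sqrt (2 * π / l)), fderiv ℝ G (x, y₂) (0, 1)) -
      (∫ x in Ioo 0 (Real.sqrt (2 * π / l)), fderiv ℝ G (x, y₁) (0, 1)) =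
      -(Real.sqrt (2 * π / l)) * (y₂ - y₁) := by
  set a := Real.sqrt (2 * π / l)
  set b := Real.sqrt (l / (2 * π))
  set φ : ℝ → ℝ := fun y => ∫ x in Ioo 0 a, fderiv ℝ G (x, y) (0, 1) with hφ_def
  have hdiff : ∀ y ∈ Ioo 0 b, HasDerivAt φ (-a) y := fun y hy =>
    hasDerivAt_phi hl hsm hper hlap hy
  have key : ∀ z₁ z₂ : ℝ, z₁ ∈ Ioo 0 b → z₂ ∈ Ioo 0 b → z₁ < z₂ →
      φ z₂ - φ z₁ = -a * (z₂ - z₁) := by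
    intro z₁ z₂ hz₁ hz₂ hlt
    have hsub : Icc z₁ z₂ ⊆ Ioo 0 b := fun y hy => ⟨lt_of_lt_of_le hz₁.1 hy.1,
      lt_of_le_of_lt hy.2 hz₂.2⟩
    have hcont : ContinuousOn φ (Icc z₁ z₂) := fun y hy =>
      (hdiff y (hsub hy)).continuousAt.continuousWithinAt
    obtain ⟨ξ, _, he⟩ := exists_hasDerivAt_eq_slope φ (fun _ => -a) hlt hcont
      (fun y hy => hdiff y (hsub (Ioo_subset_Icc_self hy)))
    rw [eq_div_iff (by linarith : z₂ - z₁ ≠ 0)] at he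
    linarith
  rcases lt_trichotomy y₁ y₂ with h | h | h
  · exact key y₁ y₂ h₁ h₂ h
  · rw [h]; ring
  · have := key y₂ y₁ h₂ h₁ h
    linarith

/-- The intrinsic weak-L² quasinorm of the gradient of the Green function of the
unit-area rectangular flat torus `ℝ²/Λ_l`, computed on the fundamental domain
`(0,α)×(0,β)`, is at least `c·l`: it blows up as the torus degenerates. -/
theorem stmt1 :
    ∃ c : ℝ, 0 < c ∧
      ∀ l : ℝ, 1 ≤ l →
      ∀ G : ℝ × ℝ → ℝ,
        ContDiffOn ℝ (⊤ : ℕ∞) G {p : ℝ × ℝ | p ∉ latticeL l} →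
        (∀ p : ℝ × ℝ, ∀ q ∈ latticeL l, G (p + q) = G p) →
        (∀ p : ℝ × ℝ, p ∉ latticeL l → lap2 G p = -1) →
        (∃ M r : ℝ, 0 < r ∧ ∀ p : ℝ × ℝ, p ≠ 0 → ‖p‖ < r →
            |G p - (1 / (2 * π)) * Real.log ‖p‖| ≤ M) →
        ENNReal.ofReal (c * l) ≤
          ⨆ (t : ℝ) (_ : 0 < t), ENNReal.ofReal (t ^ 2) *
            volume {x : ℝ × ℝ |
              x ∈ Set.Ioo 0 (Real.sqrt (2 * π / l)) ×ˢ Set.Ioo 0 (Real.sqrt (l / (2 * π))) ∧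
              t ≤ ‖fderiv ℝ G x‖} := by

  refine ⟨1 / (512 * π), by positivity, ?_⟩
  intro l hl G hsm hper hlap _hlog
  have hl0 : 0 < l := lt_of_lt_of_le one_pos hl
  set a := Real.sqrt (2 * π / l) with ha_def
  set b := Real.sqrt (l / (2 * π)) with hb_def
  have ha : 0 < a := Real.sqrt_pos.2 (by positivity)
  have hb : 0 < b := Real.sqrt_pos.2 (by positivity)
  have hab : a * b = 1 := by
    rw [ha_def, hb_def, ← Real.sqrt_mul (by positivity)]
    rw [show 2 * π / l * (l / (2 * π)) = 1 by field_simp]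
    exact Real.sqrt_one
  have hb2 : b ^ 2 = l / (2 * π) := Real.sq_sqrt (by positivity)
  set f : ℝ × ℝ → ℝ := fun p => ‖fderiv ℝ G p‖ with hf_def
  have hfmeas : Measurable f := (measurable_fderiv ℝ G).norm
  set A := ⨆ (t : ℝ) (_ : 0 < t), ENNReal.ofReal (t ^ 2) *
      volume {x : ℝ × ℝ | x ∈ Set.Ioo 0 a ×ˢ Set.Ioo 0 b ∧ t ≤ f x} with hA_def
  show ENNReal.ofReal (1 / (512 * π) * l) ≤ A
  by_cases hAtop : A = ⊤
  · rw [hAtop]; exact le_top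
  -- the weak-type bound coming from the definition of A
  have hA_ub : ∀ t : ℝ, 0 < t →
      volume {x : ℝ × ℝ | x ∈ Set.Ioo 0 a ×ˢ Set.Ioo 0 b ∧ t ≤ f x} ≤
        A / ENNReal.ofReal (t ^ 2) := by
    intro t ht
    rw [ENNReal.le_div_iff_mul_le (Or.inl (by simp [ENNReal.ofReal_eq_zero]; nlinarith))
        (Or.inl ENNReal.ofReal_ne_top), mul_comm]
    exact le_iSup₂ (f := fun (t : ℝ) (_ : 0 < t) => ENNReal.ofReal (t ^ 2) *
      volume {x : ℝ × ℝ | x ∈ Set.Ioo 0 a ×ˢ Set.Ioo 0 b ∧ t ≤ f x}) t ht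
  -- the averaged vertical derivative φ
  set φ : ℝ → ℝ := fun y => ∫ x in Ioo 0 a, fderiv ℝ G (x, y) (0, 1) with hφ_def
  have hbhalf : b / 2 ∈ Ioo 0 b := ⟨by linarith, by linarith⟩
  set ys : ℝ := b / 2 + φ (b / 2) / a with hys_def
  have hφ_eq : ∀ y ∈ Ioo 0 b, φ y = a * (ys - y) := by
    intro y hy
    have h0 := phi_slope hl hsm hper hlap hbhalf hy
    have h2 : φ y = φ (b / 2) + -a * (y - b / 2) := by linarith
    rw [h2, hys_def]
    field_simp
    ring
  -- choice of the horizontal strip T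
  obtain ⟨u, hu0, hub, hT⟩ : ∃ u : ℝ, 0 ≤ u ∧ u + b / 4 ≤ b ∧
      ∀ y ∈ Ioo u (u + b / 4), b / 4 ≤ |ys - y| := by
    clear_value ys
    by_cases hc : b / 2 ≤ ys
    · refine ⟨0, le_refl 0, by linarith, fun y hy => ?_⟩
      obtain ⟨hy1, hy2⟩ := hy
      rw [abs_of_nonneg (by linarith)]
      linarith
    · push_neg at hc
      refine ⟨3 * b / 4, by linarith, by linarith, fun y hy => ?_⟩
      obtain ⟨hy1, hy2⟩ := hy
      rw [abs_of_nonpos (by linarith)]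
      linarith
  set T : Set ℝ := Ioo u (u + b / 4) with hT_def
  have hTsub : T ⊆ Ioo 0 b := fun y hy => ⟨lt_of_le_of_lt hu0 hy.1, lt_of_lt_of_le hy.2 hub⟩
  have hvolT : volume T = ENNReal.ofReal (b / 4) := by
    rw [hT_def, Real.volume_Ioo]; norm_num
  -- lower bound on each horizontal slice
  have hinner : ∀ y ∈ T, ENNReal.ofReal (a * b / 4) ≤
      ∫⁻ x in Ioo 0 a, ENNReal.ofReal (f (x, y)) := by
    intro y hy
    have h1 : a * b / 4 ≤ |φ y| := by
      rw [hφ_eq y (hTsub hy), abs_mul, abs_of_pos ha]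
      have := hT y hy
      nlinarith [abs_nonneg (ys - y)]
    calc ENNReal.ofReal (a * b / 4) ≤ ENNReal.ofReal |φ y| := ENNReal.ofReal_le_ofReal h1
      _ = ↑‖φ y‖₊ := by rw [← enorm_eq_nnnorm, ← ofReal_norm, Real.norm_eq_abs]
      _ ≤ ∫⁻ x in Ioo 0 a, ↑‖fderiv ℝ G (x, y) (0, 1)‖₊ :=
          enorm_integral_le_lintegral_enorm _
      _ ≤ ∫⁻ x in Ioo 0 a, ENNReal.ofReal (f (x, y)) := by
          apply lintegral_mono
          intro x
          show ((‖fderiv ℝ G (x, y) (0, 1)‖₊ : NNReal) : ENNReal) ≤ ENNReal.ofReal (f (x, y))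
          rw [← enorm_eq_nnnorm, ← ofReal_norm]
          apply ENNReal.ofReal_le_ofReal
          calc ‖fderiv ℝ G (x, y) (0, 1)‖ ≤ ‖fderiv ℝ G (x, y)‖ * ‖((0 : ℝ), (1 : ℝ))‖ :=
                ContinuousLinearMap.le_opNorm _ _
            _ = f (x, y) := by rw [Prod.norm_def]; simp [hf_def]
  -- the rectangle S and the Fubini lower bound
  set S : Set (ℝ × ℝ) := Ioo 0 a ×ˢ T with hS_def
  have hvolS : volume S = ENNReal.ofReal a * ENNReal.ofReal (b / 4) := by
    rw [hS_def, Measure.volume_eq_prod, Measure.prod_prod, Real.volume_Ioo, hvolT, sub_zero]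
  have hI_lb : ENNReal.ofReal (a * b / 4) * ENNReal.ofReal (b / 4) ≤
      ∫⁻ p in S, ENNReal.ofReal (f p) := by
    have hfub : ∫⁻ p in S, ENNReal.ofReal (f p) =
        ∫⁻ y in T, ∫⁻ x in Ioo 0 a, ENNReal.ofReal (f (x, y)) := by
      rw [hS_def, Measure.volume_eq_prod, ← Measure.prod_restrict]
      exact lintegral_prod_symm _ (hfmeas.ennreal_ofReal.aemeasurable)
    rw [hfub]
    calc ENNReal.ofReal (a * b / 4) * ENNReal.ofReal (b / 4)
        = ∫⁻ _ in T, ENNReal.ofReal (a * b / 4) := by rw [setLIntegral_const, hvolT]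
      _ ≤ ∫⁻ y in T, ∫⁻ x in Ioo 0 a, ENNReal.ofReal (f (x, y)) :=
          setLIntegral_mono' measurableSet_Ioo hinner
  -- layer cake upper bound
  have hlayer : ∫⁻ p in S, ENNReal.ofReal (f p) =
      ∫⁻ t in Ioi (0:ℝ), volume.restrict S {p | t ≤ f p} :=
    lintegral_eq_lintegral_meas_le _ (ae_of_all _ fun p => norm_nonneg _)
      hfmeas.aemeasurable.restrict
  set t₀ : ℝ := b / 8 with ht₀_def
  have ht₀pos : 0 < t₀ := by rw [ht₀_def]; linarith
  have hmeas_level : ∀ t : ℝ, MeasurableSet {p : ℝ × ℝ | t ≤ f p} := fun t =>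
    hfmeas measurableSet_Ici
  have hsplit : (∫⁻ t in Ioi (0:ℝ), volume.restrict S {p | t ≤ f p}) ≤
      ENNReal.ofReal (a * b / 4) * ENNReal.ofReal t₀ + A * ENNReal.ofReal (8 / b) := by
    rw [← Ioc_union_Ioi_eq_Ioi ht₀pos.le,
      lintegral_union measurableSet_Ioi (Ioc_disjoint_Ioi le_rfl)]
    apply add_le_add
    · calc ∫⁻ t in Ioc 0 t₀, volume.restrict S {p | t ≤ f p}
          ≤ ∫⁻ _ in Ioc 0 t₀, volume S := by
            apply setLIntegral_mono' measurableSet_Ioc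
            intro t _
            rw [Measure.restrict_apply (hmeas_level t)]
            exact measure_mono inter_subset_right
        _ = ENNReal.ofReal (a * b / 4) * ENNReal.ofReal t₀ := by
            rw [setLIntegral_const, Real.volume_Ioc, sub_zero, hvolS,
              ← ENNReal.ofReal_mul (by positivity)]
            ring_nf
    · calc ∫⁻ t in Ioi t₀, volume.restrict S {p | t ≤ f p}
          ≤ ∫⁻ t in Ioi t₀, A * ENNReal.ofReal (t ^ (-2:ℝ)) := by
            apply setLIntegral_mono' measurableSet_Ioi
            intro t ht
            rw [Measure.restrict_apply (hmeas_level t)]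
            have htpos : 0 < t := lt_trans ht₀pos ht
            have hsub : {p : ℝ × ℝ | t ≤ f p} ∩ S ⊆
                {x : ℝ × ℝ | x ∈ Ioo 0 a ×ˢ Ioo 0 b ∧ t ≤ f x} := by
              rintro p ⟨hp1, hp2, hp3⟩
              exact ⟨⟨hp2, hTsub hp3⟩, hp1⟩
            calc volume ({p : ℝ × ℝ | t ≤ f p} ∩ S)
                ≤ volume {x : ℝ × ℝ | x ∈ Ioo 0 a ×ˢ Ioo 0 b ∧ t ≤ f x} := measure_mono hsub
              _ ≤ A / ENNReal.ofReal (t ^ 2) := hA_ub t htpos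
              _ = A * ENNReal.ofReal (t ^ (-2:ℝ)) := by
                  rw [div_eq_mul_inv, ← ENNReal.ofReal_inv_of_pos (by positivity)]
                  congr 1
                  rw [show ((-2:ℝ)) = -(2:ℕ) by norm_num, Real.rpow_neg htpos.le,
                    Real.rpow_natCast]
        _ = A * ∫⁻ t in Ioi t₀, ENNReal.ofReal (t ^ (-2:ℝ)) :=
            lintegral_const_mul' _ _ hAtop
        _ = A * ENNReal.ofReal (8 / b) := by
            congr 1
            rw [← ofReal_integral_eq_lintegral_ofReal
              (integrableOn_Ioi_rpow_of_lt (by norm_num) ht₀pos)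
              ((ae_restrict_iff' measurableSet_Ioi).2 (ae_of_all _ fun t ht =>
                Real.rpow_nonneg (le_of_lt (lt_trans ht₀pos ht)) _))]
            rw [integral_Ioi_rpow_of_lt (by norm_num) ht₀pos]
            congr 1
            rw [show (-2:ℝ) + 1 = -1 by norm_num, Real.rpow_neg_one, ht₀_def]
            field_simp
  -- combine everything
  have hcomb : ENNReal.ofReal (a * b * b / 16) ≤
      ENNReal.ofReal (a * b * b / 32) + A * ENNReal.ofReal (8 / b) := by
    calc ENNReal.ofReal (a * b * b / 16)
        = ENNReal.ofReal (a * b / 4) * ENNReal.ofReal (b / 4) := by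
          rw [← ENNReal.ofReal_mul (by positivity)]; ring_nf
      _ ≤ ∫⁻ p in S, ENNReal.ofReal (f p) := hI_lb
      _ = ∫⁻ t in Ioi (0:ℝ), volume.restrict S {p | t ≤ f p} := hlayer
      _ ≤ ENNReal.ofReal (a * b / 4) * ENNReal.ofReal t₀ + A * ENNReal.ofReal (8 / b) := hsplit
      _ = ENNReal.ofReal (a * b * b / 32) + A * ENNReal.ofReal (8 / b) := by
          rw [ht₀_def, ← ENNReal.ofReal_mul (by positivity)]
          ring_nf
  have h2 : ENNReal.ofReal (a * b * b / 32) ≤ A * ENNReal.ofReal (8 / b) := by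
    have h' := tsub_le_iff_left.mpr hcomb
    rw [← ENNReal.ofReal_sub _ (by positivity),
      show a * b * b / 16 - a * b * b / 32 = a * b * b / 32 by ring] at h'
    exact h'
  have h3 : ENNReal.ofReal ((a * b * b / 32) / (8 / b)) ≤ A := by
    rw [ENNReal.ofReal_div_of_pos (by positivity)]
    exact (ENNReal.div_le_iff_le_mul
      (Or.inl (by simp [ENNReal.ofReal_eq_zero]; positivity))
      (Or.inl ENNReal.ofReal_ne_top)).mpr h2
  have harith : 1 / (512 * π) * l = (a * b * b / 32) / (8 / b) := by
    have hbne : b ≠ 0 := hb.ne'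
    have : (a * b * b / 32) / (8 / b) = (a * b) * (b ^ 2) / 256 := by
      field_simp
      ring
    rw [this, hab, hb2, one_mul, div_div]
    rw [show (2 * π * 256) = 512 * π by ring]
    ring
  rw [harith]
  exact h3
end

section
/- Let l ≥ 1 and define u : A_l → ℝ by u(z) := (ln|z| + l/2)² / (4πl). Then: (i) Δu(z) = 1/(2πl·|z|²) for every z ∈ A_l; (ii) ‖∇u(z)‖ ≤ 1/(4π·|z|) for every z ∈ A_l; and consequently (iii) sup_{t>0} t² · m({z ∈ A_l : ‖∇u(z)‖ ≥ t}) ≤ 1/(16π), a bound independent of l. -/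
open MeasureTheory Real

/-- Euclidean Laplacian of a function on `ℂ ≅ ℝ²`. -/
noncomputable def lapC (f : ℂ → ℝ) (z : ℂ) : ℝ :=
  iteratedFDeriv ℝ 2 f z ![1, 1] + iteratedFDeriv ℝ 2 f z ![Complex.I, Complex.I]

/-- The annulus `A_l = {e^{-l} < |z| < 1} ⊆ ℂ`. -/
def annulus (l : ℝ) : Set ℂ := {z | Real.exp (-l) < ‖z‖ ∧ ‖z‖ < 1}

/-- The real inner product with `z`, bundled as a CLM in `z`. -/
noncomputable def J : ℂ →L[ℝ] ℂ →L[ℝ] ℝ := innerSL ℝ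

lemma J_apply (z w : ℂ) : J z w = z.re * w.re + z.im * w.im := by
  show (innerSL ℝ z) w = _
  simp [innerSL_apply_apply, Complex.inner, Complex.mul_re]
  ring

lemma J_norm (z : ℂ) : ‖J z‖ = ‖z‖ := innerSL_apply_norm (𝕜 := ℝ) z

/-- The gradient (as a continuous linear functional) of the function `u`. -/
noncomputable def Acf (l : ℝ) (z : ℂ) : ℂ →L[ℝ] ℝ :=
  ((Real.log ‖z‖ + l / 2) / (2 * π * l * Complex.normSq z)) • J z

lemma hasFDerivAt_nq (z : ℂ) :
    HasFDerivAt (fun w : ℂ => Complex.normSq w) ((2 : ℝ) • J z) z := by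
  have h1 : HasFDerivAt (fun w : ℂ => w.re * w.re + w.im * w.im)
      ((z.re • Complex.reCLM + z.re • Complex.reCLM) +
       (z.im • Complex.imCLM + z.im • Complex.imCLM)) z :=
    (Complex.reCLM.hasFDerivAt.mul Complex.reCLM.hasFDerivAt).add
      (Complex.imCLM.hasFDerivAt.mul Complex.imCLM.hasFDerivAt)
  have he : (fun w : ℂ => w.re * w.re + w.im * w.im) = fun w => Complex.normSq w := by
    funext w; rw [Complex.normSq_apply]
  rw [he] at h1
  convert h1 using 1
  ext w
  simp [J_apply]
  ring

lemma hasFDerivAt_h (l : ℝ) (z : ℂ) (hz : z ≠ 0) :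
    HasFDerivAt (fun w : ℂ => Real.log ‖w‖ + l / 2)
      ((Complex.normSq z)⁻¹ • J z) z := by
  have hnq : Complex.normSq z ≠ 0 := (Complex.normSq_pos.mpr hz).ne'
  have hlog : HasFDerivAt (fun w : ℂ => Real.log (Complex.normSq w))
      ((Complex.normSq z)⁻¹ • ((2 : ℝ) • J z)) z :=
    (Real.hasDerivAt_log hnq).comp_hasFDerivAt z (hasFDerivAt_nq z)
  have he : (fun w : ℂ => Real.log ‖w‖ + l / 2)
      = fun w => Real.log (Complex.normSq w) / 2 + l / 2 := by
    funext w
    rw [Complex.norm_def, Real.log_sqrt (Complex.normSq_nonneg w)]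
  rw [he]
  have h2 := (hlog.const_smul ((2:ℝ)⁻¹)).add_const (l / 2)
  have he2 : (fun w : ℂ => Real.log (Complex.normSq w) / 2 + l / 2)
      = fun w : ℂ => (2:ℝ)⁻¹ • Real.log (Complex.normSq w) + l / 2 := by
    funext w; rw [smul_eq_mul]; ring
  rw [he2]
  refine h2.congr_fderiv ?_
  ext w
  simp only [ContinuousLinearMap.smul_apply, smul_eq_mul]
  ring

lemma hasFDerivAt_F (l : ℝ) (hl : l ≠ 0) (z : ℂ) (hz : z ≠ 0) :
    HasFDerivAt (fun w : ℂ => (Real.log ‖w‖ + l / 2) ^ 2 / (4 * π * l)) (Acf l z) z := by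
  have hh := hasFDerivAt_h l z hz
  have hsq := hh.mul hh
  have h2 := hsq.const_smul ((4 * π * l)⁻¹)
  have he : (fun w : ℂ => (Real.log ‖w‖ + l / 2) ^ 2 / (4 * π * l))
      = fun w => (4 * π * l)⁻¹ • ((Real.log ‖w‖ + l / 2) * (Real.log ‖w‖ + l / 2)) := by
    funext w; rw [smul_eq_mul]; ring
  rw [he]
  refine h2.congr_fderiv ?_
  ext w
  have hπ := Real.pi_ne_zero
  have hnq := (Complex.normSq_pos.mpr hz).ne'
  simp only [Acf, ContinuousLinearMap.smul_apply, ContinuousLinearMap.add_apply, smul_eq_mul]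
  field_simp
  ring

lemma lap_eq (l : ℝ) (hl : l ≠ 0) (z : ℂ) (hz : z ≠ 0) :
    lapC (fun w : ℂ => (Real.log ‖w‖ + l / 2) ^ 2 / (4 * π * l)) z
      = 1 / (2 * π * l * ‖z‖ ^ 2) := by
  have hπ := Real.pi_ne_zero
  have hnq := (Complex.normSq_pos.mpr hz).ne'
  have hh := hasFDerivAt_h l z hz
  have hden : HasFDerivAt (fun w : ℂ => 2 * π * l * Complex.normSq w)
      ((2 * π * l) • ((2 : ℝ) • J z)) z := (hasFDerivAt_nq z).const_mul (2 * π * l)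
  have hne : 2 * π * l * Complex.normSq z ≠ 0 :=
    mul_ne_zero (mul_ne_zero (mul_ne_zero two_ne_zero hπ) hl) hnq
  have hinv := (hasDerivAt_inv hne).comp_hasFDerivAt z hden
  have hs := hh.mul hinv
  have hA : HasFDerivAt (Acf l) _ z :=
    (hs.smul J.hasFDerivAt).congr_of_eventuallyEq
      (Filter.Eventually.of_forall fun w => by
        simp only [Acf, Function.comp_apply, div_eq_mul_inv, Pi.smul_apply', Pi.mul_apply])
  have hev : (fun w => fderiv ℝ (fun w : ℂ => (Real.log ‖w‖ + l / 2) ^ 2 / (4 * π * l)) w)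
      =ᶠ[nhds z] Acf l := by
    filter_upwards [compl_singleton_mem_nhds hz] with w hw
    exact (hasFDerivAt_F l hl w hw).fderiv
  have hzn : ‖z‖ ^ 2 = Complex.normSq z := by
    rw [Complex.sq_norm]
  rw [lapC, iteratedFDeriv_two_apply, iteratedFDeriv_two_apply, hev.fderiv_eq, hA.fderiv, hzn]
  simp only [Matrix.cons_val_zero, Matrix.cons_val_one, Matrix.head_cons,
    ContinuousLinearMap.add_apply, ContinuousLinearMap.smul_apply,
    ContinuousLinearMap.smulRight_apply, smul_eq_mul, Function.comp_apply, J_apply,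
    Complex.one_re, Complex.one_im, Pi.mul_apply, Complex.I_re, Complex.I_im, Complex.normSq_apply]
  have hnq' : z.re * z.re + z.im * z.im ≠ 0 := by
    rw [← Complex.normSq_apply]; exact hnq
  have hnq'' : z.re ^ 2 + z.im ^ 2 ≠ 0 := by rw [sq, sq]; exact hnq'
  field_simp
  ring

lemma grad_bound (l : ℝ) (hl : 1 ≤ l) (z : ℂ) (hz : z ∈ annulus l) :
    ‖fderiv ℝ (fun z : ℂ => (Real.log ‖z‖ + l / 2) ^ 2 / (4 * π * l)) z‖ ≤
      1 / (4 * π * ‖z‖) := by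
  have hπ := Real.pi_pos
  have hzpos : 0 < ‖z‖ := lt_trans (Real.exp_pos _) hz.1
  have hz0 : z ≠ 0 := norm_pos_iff.mp hzpos
  have hlpos : (0:ℝ) < l := lt_of_lt_of_le one_pos hl
  rw [(hasFDerivAt_F l hlpos.ne' z hz0).fderiv, Acf, norm_smul, Real.norm_eq_abs, J_norm]
  have hzn : Complex.normSq z = ‖z‖ ^ 2 := by
    rw [Complex.sq_norm]
  have hlog1 : Real.log ‖z‖ < 0 := Real.log_neg hzpos hz.2
  have hlog2 : -l < Real.log ‖z‖ := by
    have h := Real.log_lt_log (Real.exp_pos (-l)) hz.1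
    rwa [Real.log_exp] at h
  have habs : |Real.log ‖z‖ + l / 2| ≤ l / 2 :=
    abs_le.mpr ⟨by linarith, by linarith⟩
  rw [hzn, abs_div, abs_of_pos (by positivity : (0:ℝ) < 2 * π * l * ‖z‖ ^ 2),
    div_mul_eq_mul_div, div_le_div_iff₀ (by positivity) (by positivity)]
  nlinarith [mul_le_mul_of_nonneg_right habs
    (by positivity : (0:ℝ) ≤ 4 * π * ‖z‖ ^ 2), abs_nonneg (Real.log ‖z‖ + l / 2)]

/-- The 'baby case': the pull-back `u(z) = (ln|z| + l/2)²/(4πl)` to the annulus chart of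
the solution of `Δ_g u = 1` on the unit-area flat cylinder of modulus `l` satisfies
`Δu = 1/(2πl|z|²)`, `‖∇u‖ ≤ 1/(4π|z|)`, and its gradient is bounded in weak-L²
uniformly in `l`. -/
theorem stmt4 (l : ℝ) (hl : 1 ≤ l) :
    (∀ z ∈ annulus l,
      lapC (fun z : ℂ => (Real.log ‖z‖ + l / 2) ^ 2 / (4 * π * l)) z =
        1 / (2 * π * l * ‖z‖ ^ 2)) ∧
    (∀ z ∈ annulus l,
      ‖fderiv ℝ (fun z : ℂ => (Real.log ‖z‖ + l / 2) ^ 2 / (4 * π * l)) z‖ ≤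
        1 / (4 * π * ‖z‖)) ∧
    (⨆ (t : ℝ) (_ : 0 < t), ENNReal.ofReal (t ^ 2) *
        volume {z : ℂ | z ∈ annulus l ∧
          t ≤ ‖fderiv ℝ (fun z : ℂ => (Real.log ‖z‖ + l / 2) ^ 2 / (4 * π * l)) z‖}) ≤
      ENNReal.ofReal (1 / (16 * π)) := by
  have hπ := Real.pi_pos
  have hlpos : (0:ℝ) < l := lt_of_lt_of_le one_pos hl
  refine ⟨fun z hz => ?_, fun z hz => grad_bound l hl z hz, ?_⟩
  · exact lap_eq l hlpos.ne' z
      (norm_pos_iff.mp (lt_trans (Real.exp_pos _) hz.1))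
  · refine iSup_le fun t => iSup_le fun ht => ?_
    have hsub : {z : ℂ | z ∈ annulus l ∧
        t ≤ ‖fderiv ℝ (fun z : ℂ => (Real.log ‖z‖ + l / 2) ^ 2 / (4 * π * l)) z‖} ⊆
        Metric.closedBall 0 (1 / (4 * π * t)) := by
      intro z hz
      have hzpos : 0 < ‖z‖ := lt_trans (Real.exp_pos _) hz.1.1
      have h1 : t ≤ 1 / (4 * π * ‖z‖) := hz.2.trans (grad_bound l hl z hz.1)
      rw [le_div_iff₀ (by positivity)] at h1
      rw [Metric.mem_closedBall, dist_zero_right, le_div_iff₀ (by positivity)]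
      nlinarith
    calc ENNReal.ofReal (t ^ 2) * volume {z : ℂ | z ∈ annulus l ∧
            t ≤ ‖fderiv ℝ (fun z : ℂ => (Real.log ‖z‖ + l / 2) ^ 2 / (4 * π * l)) z‖}
        ≤ ENNReal.ofReal (t ^ 2) * volume (Metric.closedBall (0:ℂ) (1 / (4 * π * t))) :=
          mul_le_mul_right (measure_mono hsub) _
      _ = ENNReal.ofReal (t ^ 2) * (ENNReal.ofReal ((1 / (4 * π * t)) ^ 2) *
            ENNReal.ofReal π) := by
          rw [Complex.volume_closedBall, ← ENNReal.ofReal_pow (by positivity)]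
          congr 1
          rw [← ENNReal.ofReal_coe_nnreal, NNReal.coe_real_pi]
      _ = ENNReal.ofReal (t ^ 2 * ((1 / (4 * π * t)) ^ 2 * π)) := by
          rw [ENNReal.ofReal_mul (by positivity), ENNReal.ofReal_mul (by positivity)]
      _ ≤ ENNReal.ofReal (1 / (16 * π)) := by
          apply ENNReal.ofReal_le_ofReal
          apply le_of_eq
          field_simp
          ring
end

section
/- Let l > 0 and define u : ℝ² \ {0} → ℝ by u(z) := −(ln|z|)² / (4πl). Then Δu(z) = −1/(2πl·|z|²) for every z ≠ 0, and for every z ∈ A_l one has ‖∇u(z)‖ ≤ 1/(2π·|z|); consequently sup_{t>0} t² · m({z ∈ A_l : ‖∇u(z)‖ ≥ t}) ≤ 1/(4π), a bound independent of l. -/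
set_option maxHeartbeats 1000000


open MeasureTheory Real

/-- The real bilinear form `B z w = z.re * w.re + z.im * w.im` on `ℂ`. -/
noncomputable def BF : ℂ →L[ℝ] ℂ →L[ℝ] ℝ :=
  Complex.reCLM.smulRight Complex.reCLM + Complex.imCLM.smulRight Complex.imCLM

lemma BF_apply (z w : ℂ) : BF z w = z.re * w.re + z.im * w.im := by
  simp [BF, ContinuousLinearMap.smulRight_apply]

lemma norm_BF_le (z : ℂ) : ‖BF z‖ ≤ ‖z‖ := by
  refine ContinuousLinearMap.opNorm_le_bound _ (norm_nonneg z) fun w => ?_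
  rw [BF_apply]
  have h : z.re * w.re + z.im * w.im = ((starRingEnd ℂ) z * w).re := by
    simp [Complex.mul_re]
  rw [h]
  calc |((starRingEnd ℂ) z * w).re| ≤ ‖(starRingEnd ℂ) z * w‖ := Complex.abs_re_le_norm _
    _ = ‖z‖ * ‖w‖ := by rw [norm_mul, RCLike.norm_conj]

lemma hasFDerivAt_normsq (z : ℂ) : HasFDerivAt (fun z : ℂ => ‖z‖^2) ((2:ℝ) • BF z) z := by
  have h : (fun z : ℂ => ‖z‖^2) = fun z : ℂ => z.re * z.re + z.im * z.im := by
    funext z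
    rw [Complex.sq_norm, Complex.normSq_apply]
  rw [h]
  have := ((Complex.reCLM.hasFDerivAt (x := z)).mul (Complex.reCLM.hasFDerivAt (x := z))).add
    ((Complex.imCLM.hasFDerivAt (x := z)).mul (Complex.imCLM.hasFDerivAt (x := z)))
  refine this.congr_fderiv ?_
  ext w
  simp [BF, ContinuousLinearMap.smulRight_apply]
  ring

lemma hasFDerivAt_u (l : ℝ) {z : ℂ} (hz : z ≠ 0) :
    HasFDerivAt (fun z : ℂ => -(Real.log ‖z‖) ^ 2 / (4 * π * l))
      ((-Real.log (‖z‖^2) / (4 * π * l * ‖z‖^2)) • BF z) z := by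
  have hrw : (fun z : ℂ => -(Real.log ‖z‖) ^ 2 / (4 * π * l))
      = fun z : ℂ => (-1/(16*π*l)) * ((Real.log (‖z‖^2)) * (Real.log (‖z‖^2))) := by
    funext z
    rw [Real.log_pow]
    push_cast; ring
  rw [hrw]
  have hNne : ‖z‖^2 ≠ 0 := pow_ne_zero 2 (norm_ne_zero_iff.mpr hz)
  have hg : HasFDerivAt (fun z : ℂ => Real.log (‖z‖^2)) ((‖z‖^2)⁻¹ • ((2:ℝ) • BF z)) z :=
    (hasFDerivAt_normsq z).log hNne
  have := (hg.mul hg).const_mul (-1/(16*π*l))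
  refine this.congr_fderiv ?_
  ext w
  simp only [ContinuousLinearMap.smul_apply, ContinuousLinearMap.add_apply, smul_eq_mul]
  field_simp
  ring

/-- The scalar factor of the gradient. -/
noncomputable def kf (l : ℝ) (z : ℂ) : ℝ := -Real.log (‖z‖^2) / (4 * π * l * ‖z‖^2)

lemma hasFDerivAt_kf (l : ℝ) {z : ℂ} (hz : z ≠ 0) :
    HasFDerivAt (kf l)
      ((((Real.log (‖z‖^2) - 1) / (4 * π * l * (‖z‖^2)^2)) • ((2:ℝ) • BF z)) :
        ℂ →L[ℝ] ℝ) z := by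
  have hN : (0:ℝ) < ‖z‖^2 := pow_pos (norm_pos_iff.mpr hz) 2
  have hφ : HasDerivAt (fun s : ℝ => -Real.log s / (4 * π * l * s))
      ((Real.log (‖z‖^2) - 1) / (4 * π * l * (‖z‖^2)^2)) (‖z‖^2) := by
    have h1 : HasDerivAt (fun s : ℝ => -Real.log s) (-(‖z‖^2)⁻¹) (‖z‖^2) :=
      (Real.hasDerivAt_log hN.ne').neg
    have h2 : HasDerivAt (fun s : ℝ => 4 * π * l * s) (4 * π * l) (‖z‖^2) := by
      simpa using (hasDerivAt_id (‖z‖^2)).const_mul (4 * π * l)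
    by_cases hl : l = 0
    · simp only [hl, mul_zero, zero_mul]
      simpa using (hasDerivAt_const (‖z‖^2) (0:ℝ)).congr_of_eventuallyEq
        (by filter_upwards with s; simp)
    have hπ4 : (0:ℝ) < 4 * π := by have := Real.pi_pos; linarith
    have hd : 4 * π * l * ‖z‖^2 ≠ 0 := mul_ne_zero (mul_ne_zero hπ4.ne' hl) hN.ne'
    have := h1.div h2 hd
    refine this.congr_deriv ?_
    have hπ : (π:ℝ) ≠ 0 := Real.pi_ne_zero
    have habs : ‖z‖ ≠ 0 := norm_ne_zero_iff.mpr hz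
    field_simp
    ring
  have := hφ.comp_hasFDerivAt z (hasFDerivAt_normsq z)
  exact this

lemma kf_mul (l : ℝ) (z : ℂ) :
    (fun z : ℂ => kf l z • BF z) = fun z : ℂ =>
      (-Real.log (‖z‖^2) / (4 * π * l * ‖z‖^2)) • BF z := rfl

/-- The 'diffusion part' `u(z) = -(ln|z|)²/(4πl)` of the Green function of a degenerating
flat torus in the annulus chart: `Δu = -1/(2πl|z|²)` away from `0`, `‖∇u‖ ≤ 1/(2π|z|)` on
`A_l`, and its gradient is bounded in weak-L² on `A_l` uniformly in `l`. -/
theorem stmt6 (l : ℝ) (hl : 0 < l) :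
    (∀ z : ℂ, z ≠ 0 →
      lapC (fun z : ℂ => -(Real.log ‖z‖) ^ 2 / (4 * π * l)) z =
        -(1 / (2 * π * l * ‖z‖ ^ 2))) ∧
    (∀ z ∈ annulus l,
      ‖fderiv ℝ (fun z : ℂ => -(Real.log ‖z‖) ^ 2 / (4 * π * l)) z‖ ≤ 1 / (2 * π * ‖z‖)) ∧
    (⨆ (t : ℝ) (_ : 0 < t), ENNReal.ofReal (t ^ 2) *
        volume {z : ℂ | z ∈ annulus l ∧
          t ≤ ‖fderiv ℝ (fun z : ℂ => -(Real.log ‖z‖) ^ 2 / (4 * π * l)) z‖}) ≤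
      ENNReal.ofReal (1 / (4 * π)) := by
  have hπ : (0:ℝ) < π := Real.pi_pos
  set u : ℂ → ℝ := fun z : ℂ => -(Real.log ‖z‖) ^ 2 / (4 * π * l) with hu
  -- the gradient bound (part 2), proved first
  have part2 : ∀ z ∈ annulus l, ‖fderiv ℝ u z‖ ≤ 1 / (2 * π * ‖z‖) := by
    intro z hza
    obtain ⟨h1, h2⟩ := hza
    have hz0 : (0:ℝ) < ‖z‖ := lt_trans (Real.exp_pos _) h1
    have hz : z ≠ 0 := norm_pos_iff.mp hz0
    rw [(hasFDerivAt_u l hz).fderiv]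
    have hlog : |Real.log (‖z‖^2)| ≤ 2 * l := by
      rw [Real.log_pow]
      have hneg : Real.log ‖z‖ < 0 := Real.log_neg hz0 h2
      have hgt : -l < Real.log ‖z‖ := by
        have := Real.log_lt_log (Real.exp_pos (-l)) h1
        rwa [Real.log_exp] at this
      rw [abs_mul, Nat.cast_ofNat, abs_two, abs_of_neg hneg]
      linarith
    have hdpos : (0:ℝ) < 4 * π * l * ‖z‖^2 :=
      mul_pos (mul_pos (by positivity) hl) (pow_pos hz0 2)
    calc ‖(-Real.log (‖z‖^2) / (4 * π * l * ‖z‖^2)) • BF z‖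
        = |(-Real.log (‖z‖^2) / (4 * π * l * ‖z‖^2))| * ‖BF z‖ := by
          rw [norm_smul (-Real.log (‖z‖^2) / (4 * π * l * ‖z‖^2)) (BF z), Real.norm_eq_abs]
      _ ≤ (2 * l / (4 * π * l * ‖z‖^2)) * ‖z‖ := by
          apply mul_le_mul _ (norm_BF_le z) (norm_nonneg _) (by positivity)
          rw [abs_div, abs_neg, abs_of_pos hdpos]
          gcongr
      _ = 1 / (2 * π * ‖z‖) := by
          rw [div_mul_eq_mul_div, div_eq_div_iff hdpos.ne' (by positivity)]
          ring
  refine ⟨?_, part2, ?_⟩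
  · -- the Laplacian
    intro z hz
    have hN : (0:ℝ) < ‖z‖^2 := pow_pos (norm_pos_iff.mpr hz) 2
    have hEv : fderiv ℝ u =ᶠ[nhds z] fun z : ℂ => kf l z • BF z := by
      filter_upwards [isOpen_compl_singleton.mem_nhds hz] with w hw
      exact (hasFDerivAt_u l hw).fderiv
    have hD : HasFDerivAt (fun z : ℂ => kf l z • BF z)
        ((kf l z • BF) + (((((Real.log (‖z‖^2) - 1) / (4 * π * l * (‖z‖^2)^2)) •
            ((2:ℝ) • BF z)) : ℂ →L[ℝ] ℝ).smulRight (BF z)) ) z :=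
      (hasFDerivAt_kf l hz).smul (BF.hasFDerivAt)
    have hfd : fderiv ℝ (fderiv ℝ u) z =
        (kf l z • BF) + (((((Real.log (‖z‖^2) - 1) / (4 * π * l * (‖z‖^2)^2)) •
            ((2:ℝ) • BF z)) : ℂ →L[ℝ] ℝ).smulRight (BF z)) := by
      rw [hEv.fderiv_eq]
      exact hD.fderiv
    unfold lapC
    rw [iteratedFDeriv_two_apply, iteratedFDeriv_two_apply]
    simp only [Matrix.cons_val_zero, Matrix.cons_val_one, Matrix.head_cons]
    rw [hfd]
    simp only [ContinuousLinearMap.add_apply, ContinuousLinearMap.smul_apply,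
      ContinuousLinearMap.smulRight_apply, smul_eq_mul, BF_apply, Complex.one_re,
      Complex.one_im, Complex.I_re, Complex.I_im, kf]
    have h1 : z.re * z.re + z.im * z.im = ‖z‖^2 := by
      rw [Complex.sq_norm, Complex.normSq_apply]
    have habs : ‖z‖ ≠ 0 := norm_ne_zero_iff.mpr hz
    have hπ' : (π:ℝ) ≠ 0 := Real.pi_ne_zero
    field_simp
    linear_combination (4 * Real.log (‖z‖^2) - 4) * h1
  · -- the weak-L² bound
    apply iSup₂_le
    intro t ht
    have hsub : {z : ℂ | z ∈ annulus l ∧ t ≤ ‖fderiv ℝ u z‖} ⊆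
        Metric.closedBall 0 (1 / (2 * π * t)) := by
      rintro z ⟨hza, hzt⟩
      have hz0 : (0:ℝ) < ‖z‖ := lt_trans (Real.exp_pos _) hza.1
      have hb := le_trans hzt (part2 z hza)
      rw [mem_closedBall_zero_iff]
      rw [le_div_iff₀ (by positivity)] at hb ⊢
      nlinarith
    calc ENNReal.ofReal (t ^ 2) *
          volume {z : ℂ | z ∈ annulus l ∧ t ≤ ‖fderiv ℝ u z‖}
        ≤ ENNReal.ofReal (t ^ 2) * volume (Metric.closedBall (0:ℂ) (1 / (2 * π * t))) :=
          mul_le_mul_right (measure_mono hsub) _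
      _ = ENNReal.ofReal (1 / (4 * π)) := by
          rw [Complex.volume_closedBall]
          rw [← ENNReal.ofReal_pow (by positivity), ← NNReal.coe_real_pi,
            ENNReal.ofReal_coe_nnreal.symm, ← ENNReal.ofReal_mul (by positivity),
            ← ENNReal.ofReal_mul (by positivity)]
          congr 1
          rw [NNReal.coe_real_pi]
          field_simp
          ring
end

section
/- Let ε ∈ (0, 2·arcsinh 1], set φ := arctan(sinh(ε/2)) and l := (2π/ε)(π − 2φ). Then ε² · ∫_{e^{−l}}^{1} cot²((ε/(2π))·ln r + π − φ) · dr/r = 2πε·(2·cot φ − (π − 2φ)) ≤ 8π. Consequently, for every constant v > 0, the radial function u(z) := (1/v)·ln( sin((ε/(2π))·ln|z| + π − φ) ) on A_l satisfies ∫_{A_l} ‖∇u(z)‖² dm(z) ≤ 4/v², a bound independent of ε. -/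
open MeasureTheory Real

-- FTC lemma for the radial integral
lemma ftc_lemma9 (a φ l : ℝ) (ha : 0 < a) (hφ0 : 0 < φ) (hφ4 : φ ≤ π/4)
    (hal : a * l = π - 2 * φ) :
    ∫ r in Set.Ioo (Real.exp (-l)) 1,
        (Real.cos (a * Real.log r + π - φ) / Real.sin (a * Real.log r + π - φ)) ^ 2 / r
      = (1/a) * (2 * (Real.cos φ / Real.sin φ) - (π - 2 * φ)) := by
  have hπ := Real.pi_pos
  have hl0 : 0 ≤ l := by
    have h1 : 0 < a * l := by rw [hal]; linarith
    nlinarith [h1]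
  have hexp1 : Real.exp (-l) ≤ 1 := by
    rw [Real.exp_le_one_iff]; linarith
  set s : ℝ → ℝ := fun r => a * Real.log r + π - φ with hs_def
  have hsin : ∀ r ∈ Set.uIcc (Real.exp (-l)) 1, 0 < Real.sin (s r) := by
    intro r hr
    rw [Set.uIcc_of_le hexp1] at hr
    have hr0 : 0 < r := lt_of_lt_of_le (Real.exp_pos _) hr.1
    have h1 : -l ≤ Real.log r := by
      rw [← Real.log_exp (-l)]; exact Real.log_le_log (Real.exp_pos _) hr.1
    have h2 : Real.log r ≤ 0 := Real.log_nonpos hr0.le hr.2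
    have hlow : φ ≤ s r := by
      simp only [hs_def]; nlinarith [mul_le_mul_of_nonneg_left h1 ha.le]
    have hhigh : s r ≤ π - φ := by
      simp only [hs_def]; nlinarith [mul_nonpos_of_nonneg_of_nonpos ha.le h2]
    exact Real.sin_pos_of_pos_of_lt_pi (by linarith) (by linarith)
  set F : ℝ → ℝ := fun r => (1/a) * (-(Real.cos (s r) / Real.sin (s r)) - s r) with hF_def
  have key : ∀ r ∈ Set.uIcc (Real.exp (-l)) 1,
      HasDerivAt F ((Real.cos (s r) / Real.sin (s r)) ^ 2 / r) r := by
    intro r hr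
    have hsr := hsin r hr
    rw [Set.uIcc_of_le hexp1] at hr
    have hr0 : 0 < r := lt_of_lt_of_le (Real.exp_pos _) hr.1
    have hu : HasDerivAt s (a * r⁻¹) r := by
      have := ((Real.hasDerivAt_log hr0.ne').const_mul a).add_const (π - φ)
      simpa [hs_def, add_sub_assoc] using this
    have hcot : HasDerivAt (fun t => Real.cos t / Real.sin t)
        ((-Real.sin (s r) * Real.sin (s r) - Real.cos (s r) * Real.cos (s r)) /
          Real.sin (s r) ^ 2) (s r) :=
      (Real.hasDerivAt_cos (s r)).div (Real.hasDerivAt_sin (s r)) hsr.ne'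
    have hc := (hcot.comp r hu)
    have hF : HasDerivAt F ((1/a) * (-(((-Real.sin (s r) * Real.sin (s r) -
        Real.cos (s r) * Real.cos (s r)) / Real.sin (s r) ^ 2) * (a * r⁻¹)) - a * r⁻¹)) r :=
      ((hc.neg.sub hu)).const_mul (1/a)
    convert hF using 1
    have hpyth := Real.sin_sq_add_cos_sq (s r)
    field_simp
    nlinarith [hsr, hr0, sq_nonneg (Real.sin (s r)), sq_nonneg (Real.cos (s r))]
  have hsub : Set.uIcc (Real.exp (-l)) 1 ⊆ {(0:ℝ)}ᶜ := by
    intro r hr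
    rw [Set.uIcc_of_le hexp1] at hr
    exact (lt_of_lt_of_le (Real.exp_pos _) hr.1).ne'
  have hscont : ContinuousOn s (Set.uIcc (Real.exp (-l)) 1) := by
    have h0 : ContinuousOn (fun r => a * Real.log r + (π - φ)) (Set.uIcc (Real.exp (-l)) 1) :=
      (continuousOn_const.mul (Real.continuousOn_log.mono hsub)).add continuousOn_const
    exact h0.congr (fun r hr => by simp only [hs_def]; ring)
  have hcont : IntervalIntegrable
      (fun r => (Real.cos (s r) / Real.sin (s r)) ^ 2 / r) volume (Real.exp (-l)) 1 := by
    apply ContinuousOn.intervalIntegrable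
    exact ((((Real.continuous_cos.comp_continuousOn hscont).div
      (Real.continuous_sin.comp_continuousOn hscont)
      (fun r hr => (hsin r hr).ne')).pow 2).div continuousOn_id
      (fun r hr => hsub hr))
  have hftc := intervalIntegral.integral_eq_sub_of_hasDerivAt key hcont
  have e1 : s 1 = π - φ := by simp [hs_def]
  have e2 : s (Real.exp (-l)) = φ := by
    simp only [hs_def, Real.log_exp, mul_neg]; linarith [hal]
  have heq : (∫ r in Set.Ioo (Real.exp (-l)) 1,
      (Real.cos (a * Real.log r + π - φ) / Real.sin (a * Real.log r + π - φ)) ^ 2 / r)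
      = ∫ r in (Real.exp (-l))..1, (Real.cos (s r) / Real.sin (s r)) ^ 2 / r := by
    rw [intervalIntegral.integral_of_le hexp1, ← MeasureTheory.integral_Ioc_eq_integral_Ioo]
  rw [heq, hftc, hF_def]
  simp only []
  rw [e1, e2, Real.cos_pi_sub, Real.sin_pi_sub]
  ring

lemma fderiv_calc9 (a φ v : ℝ) (hv : v ≠ 0) (z : ℂ) (hz : z ≠ 0)
    (hsin : 0 < Real.sin (a * Real.log ‖z‖ + π - φ)) :
    ‖fderiv ℝ (fun z : ℂ => (1 / v) * Real.log (Real.sin (a * Real.log ‖z‖ + π - φ))) z‖ ^ 2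
      = (a / v) ^ 2 * ((Real.cos (a * Real.log ‖z‖ + π - φ) /
          Real.sin (a * Real.log ‖z‖ + π - φ)) ^ 2 / ‖z‖ ^ 2) := by
  set r := ‖z‖ with hr_def
  have hr : 0 < r := norm_pos_iff.mpr hz
  set u := a * Real.log r + π - φ with hu_def
  have hnd : DifferentiableAt ℝ (fun z : ℂ => ‖z‖) z :=
    ((contDiffAt_norm ℝ (n := 1) hz).differentiableAt one_ne_zero)
  have hu : HasDerivAt (fun t : ℝ => a * Real.log t + π - φ) (a * r⁻¹) r := by
    have := ((Real.hasDerivAt_log hr.ne').const_mul a).add_const (π - φ)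
    simpa [add_sub_assoc] using this
  have hcomp : HasDerivAt (fun t : ℝ => Real.sin (a * Real.log t + π - φ))
      (Real.cos u * (a * r⁻¹)) r := by have := (Real.hasDerivAt_sin u).comp r hu; exact this
  have hg : HasDerivAt (fun t : ℝ => (1 / v) * Real.log (Real.sin (a * Real.log t + π - φ)))
      ((1 / v) * ((Real.sin u)⁻¹ * (Real.cos u * (a * r⁻¹)))) r :=
    ((Real.hasDerivAt_log hsin.ne').comp r hcomp).const_mul (1 / v)
  have hf : HasFDerivAt (fun z : ℂ => (1 / v) * Real.log (Real.sin (a * Real.log ‖z‖ + π - φ)))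
      (((1 / v) * ((Real.sin u)⁻¹ * (Real.cos u * (a * r⁻¹)))) • fderiv ℝ (fun z : ℂ => ‖z‖) z)
      z := by have := hg.comp_hasFDerivAt z hnd.hasFDerivAt; exact this
  rw [hf.fderiv, norm_smul, Real.norm_eq_abs, norm_fderiv_norm hnd, mul_one, sq_abs]
  field_simp

lemma radial_int9 (G : ℝ → ℝ) (x : ℝ) (hx : 0 < x) :
    ∫ z in {z : ℂ | x < ‖z‖ ∧ ‖z‖ < 1}, G ‖z‖
      = 2 * π * ∫ y in Set.Ioo x 1, y * G y := by
  have hset : {z : ℂ | x < ‖z‖ ∧ ‖z‖ < 1} = (fun z : ℂ => ‖z‖) ⁻¹' (Set.Ioo x 1) := rfl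
  have hmeas : MeasurableSet ((fun z : ℂ => ‖z‖) ⁻¹' (Set.Ioo x 1)) :=
    measurableSet_Ioo.preimage measurable_norm
  rw [hset, ← MeasureTheory.integral_indicator hmeas]
  have hind : ∀ z : ℂ, ((fun z : ℂ => ‖z‖) ⁻¹' (Set.Ioo x 1)).indicator
      (fun z : ℂ => G ‖z‖) z = (Set.Ioo x 1).indicator G ‖z‖ := by
    intro z
    classical
    rw [Set.indicator_apply, Set.indicator_apply, Set.mem_preimage]
    by_cases h : ‖z‖ ∈ Set.Ioo x 1 <;> simp [h]
  simp_rw [hind]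
  rw [MeasureTheory.integral_fun_norm_addHaar volume ((Set.Ioo x 1).indicator G)]
  simp only [Complex.finrank_real_complex, Complex.volume_ball]
  have hball : volume.real (Metric.ball (0:ℂ) 1) = π := by
    simp [Measure.real, Complex.volume_ball]
  rw [hball]
  have hpow : ∀ y : ℝ, y ^ (2 - 1) • (Set.Ioo x 1).indicator G y
      = (Set.Ioo x 1).indicator (fun y => y * G y) y := by
    intro y
    by_cases h : y ∈ Set.Ioo x 1 <;> simp [Set.indicator_apply, h]
  simp_rw [hpow]
  rw [MeasureTheory.setIntegral_indicator measurableSet_Ioo]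
  have : Set.Ioi 0 ∩ Set.Ioo x 1 = Set.Ioo x 1 := by
    apply Set.inter_eq_self_of_subset_right
    exact fun y hy => lt_trans hx hy.1
  rw [this, smul_eq_mul, nsmul_eq_mul]
  ring

/-- Energy estimate for the 'diffusion part' of the Green function in the hyperbolic
collar chart: `ε² ∫_{e^{-l}}^1 cot²((ε/2π) ln r + π - φ) dr/r = 2πε(2 cot φ - (π - 2φ)) ≤ 8π`,
and hence `u(z) = (1/v) ln sin((ε/2π) ln|z| + π - φ)` has Dirichlet energy at most `4/v²`
on `A_l`, independently of `ε`. -/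
theorem stmt9 (ε : ℝ) (hε : ε ∈ Set.Ioc 0 (2 * Real.arsinh 1))
    (φ l : ℝ) (hφ : φ = Real.arctan (Real.sinh (ε / 2)))
    (hl : l = (2 * π / ε) * (π - 2 * φ)) :
    (ε ^ 2 * ∫ r in Set.Ioo (Real.exp (-l)) 1,
        (Real.cos (ε / (2 * π) * Real.log r + π - φ) /
         Real.sin (ε / (2 * π) * Real.log r + π - φ)) ^ 2 / r) =
      2 * π * ε * (2 * (Real.cos φ / Real.sin φ) - (π - 2 * φ)) ∧
    2 * π * ε * (2 * (Real.cos φ / Real.sin φ) - (π - 2 * φ)) ≤ 8 * π ∧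
    (∀ v : ℝ, 0 < v →
      (∫ z in annulus l,
          ‖fderiv ℝ (fun z : ℂ =>
            (1 / v) * Real.log (Real.sin (ε / (2 * π) * Real.log ‖z‖ + π - φ))) z‖ ^ 2) ≤
        4 / v ^ 2) := by
  obtain ⟨hε0, hε2⟩ := hε
  have hπ := Real.pi_pos
  set x := Real.sinh (ε / 2) with hx_def
  have hx0 : 0 < x := Real.sinh_pos_iff.mpr (by linarith)
  have hx1 : x ≤ 1 := by
    calc x ≤ Real.sinh (Real.arsinh 1) := Real.sinh_le_sinh.mpr (by linarith)
    _ = 1 := Real.sinh_arsinh 1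
  have hφ0 : 0 < φ := by
    rw [hφ]
    simpa using Real.arctan_strictMono hx0
  have hφ4 : φ ≤ π / 4 := by
    rw [hφ, ← Real.arctan_one]
    exact Real.arctan_strictMono.monotone hx1
  have hcot : Real.cos φ / Real.sin φ = 1 / x := by
    rw [hφ, Real.cos_arctan, Real.sin_arctan]
    have hs : (0:ℝ) < Real.sqrt (1 + x ^ 2) := Real.sqrt_pos.mpr (by positivity)
    field_simp
  set a := ε / (2 * π) with ha_def
  have ha : 0 < a := by positivity
  have hal : a * l = π - 2 * φ := by
    rw [ha_def, hl]; field_simp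
  set K := 2 * (Real.cos φ / Real.sin φ) - (π - 2 * φ) with hK_def
  have hI := ftc_lemma9 a φ l ha hφ0 hφ4 hal
  have part1 : (ε ^ 2 * ∫ r in Set.Ioo (Real.exp (-l)) 1,
      (Real.cos (a * Real.log r + π - φ) / Real.sin (a * Real.log r + π - φ)) ^ 2 / r)
      = 2 * π * ε * K := by
    rw [hI, ha_def]
    field_simp
    ring
  have part2 : 2 * π * ε * K ≤ 8 * π := by
    have h1 : ε / 2 ≤ x := (Real.self_lt_sinh_iff.mpr (by linarith : (0:ℝ) < ε / 2)).le
    have h2 : ε * (1 / x) ≤ 2 := by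
      rw [mul_one_div, div_le_iff₀ hx0]; linarith
    have h3 : π * (ε * (1 / x)) ≤ π * 2 := mul_le_mul_of_nonneg_left h2 hπ.le
    have h4 : 0 ≤ (π * ε) * (π - 2 * φ) :=
      mul_nonneg (mul_nonneg hπ.le hε0.le) (by linarith)
    rw [hK_def, hcot]
    nlinarith [h3, h4]
  refine ⟨part1, part2, ?_⟩
  intro v hv
  have hεK : ε * K ≤ 4 := by nlinarith [part2, hπ]
  set G : ℝ → ℝ := fun y => (a / v) ^ 2 *
    ((Real.cos (a * Real.log y + π - φ) / Real.sin (a * Real.log y + π - φ)) ^ 2 / y ^ 2)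
    with hG_def
  have hann_meas : MeasurableSet (annulus l) := by
    have : annulus l = (fun z : ℂ => ‖z‖) ⁻¹' (Set.Ioo (Real.exp (-l)) 1) := rfl
    rw [this]
    exact measurableSet_Ioo.preimage measurable_norm
  have hcongr : (∫ z in annulus l,
      ‖fderiv ℝ (fun z : ℂ =>
        (1 / v) * Real.log (Real.sin (a * Real.log ‖z‖ + π - φ))) z‖ ^ 2)
      = ∫ z in annulus l, G ‖z‖ := by
    apply MeasureTheory.setIntegral_congr_fun hann_meas
    intro z hz
    obtain ⟨hz1, hz2⟩ := hz
    have hr0 : 0 < ‖z‖ := lt_trans (Real.exp_pos _) hz1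
    have hz0 : z ≠ 0 := norm_pos_iff.mp hr0
    have hsinpos : 0 < Real.sin (a * Real.log ‖z‖ + π - φ) := by
      have h1 : -l < Real.log ‖z‖ := by
        rw [← Real.log_exp (-l)]; exact Real.log_lt_log (Real.exp_pos _) hz1
      have h2 : Real.log ‖z‖ < 0 := Real.log_neg hr0 hz2
      have hlow : φ < a * Real.log ‖z‖ + π - φ := by
        nlinarith [mul_lt_mul_of_pos_left h1 ha]
      have hhigh : a * Real.log ‖z‖ + π - φ < π - φ := by
        nlinarith [mul_neg_of_pos_of_neg ha h2]
      exact Real.sin_pos_of_pos_of_lt_pi (by linarith) (by linarith)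
    exact fderiv_calc9 a φ v hv.ne' z hz0 hsinpos
  have hrad := radial_int9 G (Real.exp (-l)) (Real.exp_pos _)
  have hann : annulus l = {z : ℂ | Real.exp (-l) < ‖z‖ ∧ ‖z‖ < 1} := rfl
  have hinner : (∫ y in Set.Ioo (Real.exp (-l)) 1, y * G y)
      = (a / v) ^ 2 * ((1 / a) * K) := by
    rw [← hI]
    rw [← MeasureTheory.integral_const_mul]
    apply MeasureTheory.setIntegral_congr_fun measurableSet_Ioo
    intro y hy
    have hy0 : 0 < y := lt_trans (Real.exp_pos _) hy.1
    have hy' : y ≠ 0 := hy0.ne'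
    have hgen : ∀ w q : ℝ, y * (w * (q / y ^ 2)) = w * (q / y) := by
      intro w q; field_simp
    show y * G y = _
    rw [hG_def]
    exact hgen _ _
  rw [hcongr, hann, hrad, hinner]
  have heq : 2 * π * ((a / v) ^ 2 * ((1 / a) * K)) = (ε * K) / v ^ 2 := by
    rw [ha_def]
    field_simp
  rw [heq]
  exact (div_le_div_iff_of_pos_right (by positivity)).mpr hεK
end

section
/- There exists an absolute constant C > 0 such that for every harmonic function h on the open unit disc 𝔻 ⊆ ℝ² one has sup_{z ∈ 𝔻, |z| ≤ 1/2} |h(z) − h(0)| ≤ C · ( sup_{t>0} t² · m({z ∈ 𝔻 : ‖∇h(z)‖ ≥ t}) )^{1/2}. That is, a harmonic function on the disc whose gradient is bounded in weak-L² has oscillation on the half-disc controlled by its weak-L² gradient quasinorm. -/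
open MeasureTheory Real
open Metric Set
open scoped ENNReal NNReal

lemma circle_mean {f : ℂ → ℂ} {c : ℂ} {R : ℝ} (hR : 0 < R)
    (hc : ContinuousOn f (closedBall c R))
    (hd : ∀ x ∈ ball c R, DifferentiableAt ℂ f x) :
    ∫ θ in (0:ℝ)..(2*π), f (circleMap c R θ) = (2*π : ℝ) • f c := by
  have h1 := Complex.circleIntegral_sub_inv_smul_of_differentiable_on_off_countable
    (s := ∅) Set.countable_empty (Metric.mem_ball_self hR) hc
    (fun x hx => hd x hx.1)
  rw [circleIntegral] at h1
  have h2 : ∀ θ : ℝ, deriv (circleMap c R) θ •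
      ((circleMap c R θ - c)⁻¹ • f (circleMap c R θ))
      = Complex.I • f (circleMap c R θ) := by
    intro θ
    rw [deriv_circleMap, circleMap_sub_center, smul_smul]
    congr 1
    rw [mul_comm, ← mul_assoc, inv_mul_cancel₀ (circleMap_ne_center hR.ne' (c := 0))]
    · simp
  simp_rw [h2] at h1
  rw [intervalIntegral.integral_smul] at h1
  have : ((2*π : ℝ) • f c : ℂ) = (2*(π:ℂ)) * f c := by
    rw [Complex.real_smul]; push_cast; ring
  rw [this]
  have h4 : Complex.I * ∫ (x : ℝ) in (0:ℝ)..2 * π, f (circleMap c R x)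
      = Complex.I * ((2*(π:ℂ)) * f c) := by
    rw [← smul_eq_mul, h1, smul_eq_mul]; ring
  exact mul_left_cancel₀ Complex.I_ne_zero h4

lemma area_mean {f : ℂ → ℂ} {c : ℂ}
    (hd : ∀ x ∈ ball (0:ℂ) 1, DifferentiableAt ℂ f x)
    (hsub : closedBall c (1/4) ⊆ ball (0:ℂ) 1) :
    π * ‖f c‖ ≤ 32 * ∫ w in closedBall c (1/4), ‖f w‖ := by
  have hcont : ContinuousOn f (ball (0:ℂ) 1) := fun x hx =>
    (hd x hx).continuousAt.continuousWithinAt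
  set E : Set ℂ := closedBall c (1/4) with hE
  set S : Set ℂ := ball c (1/4) \ closedBall c (1/8) with hS
  set T : Set (ℝ × ℝ) := Ioo (1/8 : ℝ) (1/4) ×ˢ Ioo (-π) π with hT
  set sy : ℝ × ℝ → ℂ := fun p => Complex.polarCoord.symm p with hsy
  have hsyc : Continuous sy := by
    simp only [hsy, Complex.polarCoord_symm_apply]
    fun_prop
  have hnormsy : ∀ p : ℝ × ℝ, ‖sy p‖ = |p.1| := by
    intro p
    exact Complex.norm_polarCoord_symm p
  have hdist : ∀ p : ℝ × ℝ, dist (c + sy p) c = |p.1| := by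
    intro p
    rw [dist_eq_norm, add_sub_cancel_left, hnormsy]
  have hSmeas : MeasurableSet S := measurableSet_ball.diff measurableSet_closedBall
  have hTmeas : MeasurableSet T := measurableSet_Ioo.prod measurableSet_Ioo
  have hSE : S ⊆ E := fun w hw => ball_subset_closedBall hw.1
  have hcE : ContinuousOn (fun w => ‖f w‖) E := (hcont.mono hsub).norm
  have hIntE : IntegrableOn (fun w => ‖f w‖) E :=
    hcE.integrableOn_compact (isCompact_closedBall c _)
  have step1 : ∫ w in S, ‖f w‖ ≤ ∫ w in E, ‖f w‖ := by
    apply setIntegral_mono_set hIntE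
    · exact Filter.Eventually.of_forall fun w => norm_nonneg _
    · exact Filter.Eventually.of_forall hSE
  -- closure of T and continuity of the polar integrand
  have hclT : closure T = Icc (1/8 : ℝ) (1/4) ×ˢ Icc (-π) π := by
    rw [hT, closure_prod_eq, closure_Ioo (by norm_num : (1/8:ℝ) ≠ 1/4),
      closure_Ioo (by nlinarith [pi_pos] : (-π:ℝ) ≠ π)]
  have hmap : ∀ p : ℝ × ℝ, p ∈ Icc (1/8 : ℝ) (1/4) ×ˢ Icc (-π) π → c + sy p ∈ E := by
    rintro p ⟨hp1, -⟩
    simp only [hE, mem_closedBall]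
    rw [hdist, abs_of_nonneg (by linarith [hp1.1])]
    exact hp1.2
  have hGc : ContinuousOn (fun p : ℝ × ℝ => ‖f (c + sy p)‖) (closure T) := by
    apply ContinuousOn.norm
    apply hcont.comp ((continuous_const.add hsyc).continuousOn)
    intro p hp
    exact hsub (hmap p (hclT ▸ hp))
  have hclcomp : IsCompact (closure T) := by
    rw [hclT]; exact isCompact_Icc.prod isCompact_Icc
  have hIntT : IntegrableOn (fun p : ℝ × ℝ => ‖f (c + sy p)‖) T :=
    (hGc.integrableOn_compact hclcomp).mono_set subset_closure
  have hIntT1 : IntegrableOn (fun p : ℝ × ℝ => p.1 * ‖f (c + sy p)‖) T :=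
    ((continuous_fst.continuousOn.mul hGc).integrableOn_compact hclcomp).mono_set
      subset_closure
  -- polar coordinates : ∫_S ‖f‖ = ∫_T p.1 * ‖f (c + sy p)‖
  have hpolar0 :
      (∫ p in polarCoord.target, p.1 • (S.indicator (fun u => ‖f u‖)) (c + sy p))
        = ∫ w in S, ‖f w‖ := by
    rw [Complex.integral_comp_polarCoord_symm (fun w => S.indicator (fun u => ‖f u‖) (c + w)),
      integral_add_left_eq_self (S.indicator (fun u => ‖f u‖)) c,
      integral_indicator hSmeas]
  have hLHS :
      (∫ p in polarCoord.target, p.1 • (S.indicator (fun u => ‖f u‖)) (c + sy p))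
        = ∫ p in T, p.1 * ‖f (c + sy p)‖ := by
    rw [polarCoord_target]
    have hcongr : ∀ p ∈ Ioi (0:ℝ) ×ˢ Ioo (-π) π,
        p.1 • (S.indicator (fun u => ‖f u‖)) (c + sy p)
          = T.indicator (fun p : ℝ × ℝ => p.1 * ‖f (c + sy p)‖) p := by
      rintro ⟨r, θ⟩ ⟨hr, hθ⟩
      simp only [mem_Ioi] at hr
      by_cases hrT : r ∈ Ioo (1/8 : ℝ) (1/4)
      · have hmem : c + sy (r, θ) ∈ S := by
          constructor
          · rw [mem_ball, hdist, abs_of_pos hr]; exact hrT.2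
          · rw [mem_closedBall, not_le, hdist, abs_of_pos hr]; exact hrT.1
        have hmemT : ((r, θ) : ℝ × ℝ) ∈ T := ⟨hrT, hθ⟩
        rw [indicator_of_mem hmem, indicator_of_mem hmemT, smul_eq_mul]
      · have hmem : c + sy (r, θ) ∉ S := by
          intro hmem
        -- derive contradiction
          apply hrT
          obtain ⟨h1, h2⟩ := hmem
          rw [mem_ball, hdist, abs_of_pos hr] at h1
          rw [mem_closedBall, not_le, hdist, abs_of_pos hr] at h2
          exact ⟨h2, h1⟩
        have hmemT : ((r, θ) : ℝ × ℝ) ∉ T := by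
          intro h; exact hrT h.1
        rw [indicator_of_notMem hmem, indicator_of_notMem hmemT, smul_zero]
    rw [setIntegral_congr_fun (measurableSet_Ioi.prod measurableSet_Ioo) hcongr,
      setIntegral_indicator hTmeas,
      inter_eq_self_of_subset_right]
    rintro ⟨r, θ⟩ ⟨hr, hθ⟩
    exact ⟨lt_trans (by norm_num) hr.1, hθ⟩
  -- lower bound by dropping the weight p.1 ≥ 1/8
  have hA_lower : (1/8 : ℝ) * ∫ p in T, ‖f (c + sy p)‖
      ≤ ∫ p in T, p.1 * ‖f (c + sy p)‖ := by
    rw [← integral_const_mul]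
    apply setIntegral_mono_on (hIntT.const_mul _) hIntT1 hTmeas
    rintro ⟨r, θ⟩ ⟨hr, -⟩
    exact mul_le_mul_of_nonneg_right (le_of_lt hr.1) (norm_nonneg _)
  -- Fubini
  have hvol : (volume : Measure (ℝ × ℝ)) = (volume : Measure ℝ).prod volume := rfl
  have hIntT' : Integrable (fun p : ℝ × ℝ => ‖f (c + sy p)‖)
      (((volume : Measure ℝ).restrict (Ioo (1/8 : ℝ) (1/4))).prod
        ((volume : Measure ℝ).restrict (Ioo (-π) π))) := by
    rw [Measure.prod_restrict, ← hvol]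
    exact hIntT
  have hIntT'' : IntegrableOn (fun p : ℝ × ℝ => ‖f (c + sy p)‖)
      (Ioo (1/8 : ℝ) (1/4) ×ˢ Ioo (-π) π) ((volume : Measure ℝ).prod volume) := by
    have := hIntT'
    rwa [Measure.prod_restrict] at this
  have hfub : ∫ p in T, ‖f (c + sy p)‖
      = ∫ r in Ioo (1/8 : ℝ) (1/4), ∫ θ in Ioo (-π) π, ‖f (c + sy (r, θ))‖ := by
    rw [hT, hvol]
    exact setIntegral_prod _ hIntT''
  -- the circle mean value bound for each radius
  have hcirc : ∀ r ∈ Ioo (1/8 : ℝ) (1/4),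
      (2*π) * ‖f c‖ ≤ ∫ θ in Ioo (-π) π, ‖f (c + sy (r, θ))‖ := by
    intro r hr
    have hr0 : 0 < r := lt_trans (by norm_num) hr.1
    have hmap2 : ∀ θ : ℝ, c + sy (r, θ) = circleMap c r θ := by
      intro θ
      simp only [hsy, Complex.polarCoord_symm_apply, circleMap]
      rw [Complex.exp_mul_I]
      push_cast
      ring
    simp_rw [hmap2]
    have hsubr : closedBall c r ⊆ ball (0:ℂ) 1 := by
      refine subset_trans (closedBall_subset_closedBall ?_) hsub
      exact le_of_lt hr.2
    have hcm := circle_mean hr0 (hcont.mono hsubr)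
      (fun x hx => hd x (hsubr (ball_subset_closedBall hx)))
    have hper : Function.Periodic (fun θ => ‖f (circleMap c r θ)‖) (2*π) := by
      intro θ
      simp [periodic_circleMap c r θ]
    have hshift : ∫ θ in (-π)..π, ‖f (circleMap c r θ)‖
        = ∫ θ in (0:ℝ)..(2*π), ‖f (circleMap c r θ)‖ := by
      have h2 := hper.intervalIntegral_add_eq (-π) 0
      rw [zero_add] at h2
      rw [show (-π) + 2*π = π by ring] at h2
      exact h2
    have hIoo : ∫ θ in Ioo (-π) π, ‖f (circleMap c r θ)‖
        = ∫ θ in (-π)..π, ‖f (circleMap c r θ)‖ := by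
      rw [intervalIntegral.integral_of_le (by nlinarith [pi_pos] : (-π:ℝ) ≤ π),
        integral_Ioc_eq_integral_Ioo]
    rw [hIoo, hshift]
    calc (2*π) * ‖f c‖ = ‖(2*π : ℝ) • f c‖ := by
          rw [norm_smul, Real.norm_eq_abs, abs_of_pos two_pi_pos]
      _ = ‖∫ θ in (0:ℝ)..(2*π), f (circleMap c r θ)‖ := by rw [hcm]
      _ ≤ ∫ θ in (0:ℝ)..(2*π), ‖f (circleMap c r θ)‖ :=
          intervalIntegral.norm_integral_le_integral_norm (by positivity)
  -- integrability of the inner integral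
  have hInner_int : IntegrableOn
      (fun r => ∫ θ in Ioo (-π) π, ‖f (c + sy (r, θ))‖) (Ioo (1/8 : ℝ) (1/4)) :=
    hIntT'.integral_prod_left
  have houter : ∫ r in Ioo (1/8 : ℝ) (1/4), (2*π) * ‖f c‖
      ≤ ∫ r in Ioo (1/8 : ℝ) (1/4), ∫ θ in Ioo (-π) π, ‖f (c + sy (r, θ))‖ :=
    setIntegral_mono_on (integrableOn_const measure_Ioo_lt_top.ne)
      hInner_int measurableSet_Ioo hcirc
  have hconst : ∫ r in Ioo (1/8 : ℝ) (1/4), (2*π) * ‖f c‖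
      = (1/8) * ((2*π) * ‖f c‖) := by
    rw [setIntegral_const, measureReal_def, Real.volume_Ioo]
    rw [ENNReal.toReal_ofReal (by norm_num)]
    norm_num
  nlinarith [step1, hA_lower, hpolar0, hLHS, hfub, houter, hconst, norm_nonneg (f c),
    pi_pos]

lemma weakL2_bound {φ : ℂ → ℝ} (hmble : Measurable φ) (hnn : ∀ w, 0 ≤ φ w)
    {E : Set ℂ} (hEsub : E ⊆ ball (0:ℂ) 1) (hEvol : volume E ≤ 1)
    (hint : IntegrableOn φ E) {M : ℝ} (hM : 0 ≤ M)
    (hyp : ∀ t : ℝ, 0 < t →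
      ENNReal.ofReal (t^2) * volume {z : ℂ | z ∈ ball (0:ℂ) 1 ∧ t ≤ φ z} ≤ ENNReal.ofReal M) :
    ∫ w in E, φ w ≤ 2 * Real.sqrt M := by
  set t₀ := Real.sqrt M with ht₀def
  have ht₀ : 0 ≤ t₀ := Real.sqrt_nonneg M
  have hmuM : ∀ t : ℝ, 0 < t →
      (volume.restrict E) {a | t < φ a} ≤ ENNReal.ofReal (M / t^2) := by
    intro t ht
    have h1 : (volume.restrict E) {a | t < φ a}
        ≤ volume {z : ℂ | z ∈ ball (0:ℂ) 1 ∧ t ≤ φ z} := by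
      rw [Measure.restrict_apply (measurableSet_lt measurable_const hmble)]
      apply measure_mono
      rintro a ⟨ha1, ha2⟩
      exact ⟨hEsub ha2, le_of_lt ha1⟩
    refine h1.trans ?_
    rw [ENNReal.ofReal_div_of_pos (by positivity),
      ENNReal.le_div_iff_mul_le (Or.inl (by simp [ht.ne', pow_pos] : ENNReal.ofReal (t^2) ≠ 0))
        (Or.inl ENNReal.ofReal_ne_top), mul_comm]
    exact hyp t ht
  have hmu1 : ∀ t : ℝ, (volume.restrict E) {a | t < φ a} ≤ 1 := by
    intro t
    calc (volume.restrict E) {a | t < φ a} ≤ (volume.restrict E) univ :=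
          measure_mono (subset_univ _)
      _ = volume E := by rw [Measure.restrict_apply_univ]
      _ ≤ 1 := hEvol
  have hsplit : ∫⁻ t in Ioi (0:ℝ), (volume.restrict E) {a | t < φ a}
      ≤ ENNReal.ofReal t₀ + ENNReal.ofReal (Real.sqrt M) := by
    rw [← Ioc_union_Ioi_eq_Ioi ht₀,
      lintegral_union measurableSet_Ioi (Ioc_disjoint_Ioi le_rfl)]
    gcongr
    · calc ∫⁻ t in Ioc (0:ℝ) t₀, (volume.restrict E) {a | t < φ a}
          ≤ ∫⁻ _ in Ioc (0:ℝ) t₀, 1 := lintegral_mono fun t => hmu1 t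
        _ = volume (Ioc (0:ℝ) t₀) := setLIntegral_one _
        _ = ENNReal.ofReal t₀ := by rw [Real.volume_Ioc, sub_zero]
    · rcases eq_or_lt_of_le hM with hM0 | hMpos
      · have hz : ∀ t ∈ Ioi t₀, (volume.restrict E) {a | t < φ a} ≤ 0 := by
          intro t ht
          have ht' : 0 < t := lt_of_le_of_lt ht₀ ht
          simpa [← hM0] using hmuM t ht'
        calc ∫⁻ t in Ioi t₀, (volume.restrict E) {a | t < φ a}
            ≤ ∫⁻ _ in Ioi t₀, 0 := setLIntegral_mono measurable_const hz
          _ = 0 := by simp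
          _ ≤ _ := zero_le
      · have ht₀pos : 0 < t₀ := Real.sqrt_pos.mpr hMpos
        have hcongr : ∀ t ∈ Ioi t₀, M / t^2 = M * t ^ (-2:ℝ) := by
          intro t ht
          have htp : 0 < t := lt_trans ht₀pos ht
          rw [show (-2:ℝ) = -((2:ℕ):ℝ) by norm_num, Real.rpow_neg htp.le,
            Real.rpow_natCast, div_eq_mul_inv]
        have hint2 : IntegrableOn (fun t : ℝ => M / t^2) (Ioi t₀) := by
          apply IntegrableOn.congr_fun _ (fun t ht => (hcongr t ht).symm) measurableSet_Ioi
          exact (integrableOn_Ioi_rpow_of_lt (by norm_num) ht₀pos).const_mul M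
        calc ∫⁻ t in Ioi t₀, (volume.restrict E) {a | t < φ a}
            ≤ ∫⁻ t in Ioi t₀, ENNReal.ofReal (M / t^2) := by
              apply setLIntegral_mono (by fun_prop) fun t ht => hmuM t (lt_of_le_of_lt ht₀ ht)
          _ = ENNReal.ofReal (∫ t in Ioi t₀, M / t^2) := by
              rw [← ofReal_integral_eq_lintegral_ofReal hint2
                (Filter.Eventually.of_forall fun t => by positivity)]
          _ = ENNReal.ofReal (Real.sqrt M) := by
              congr 1
              rw [setIntegral_congr_fun measurableSet_Ioi hcongr, integral_const_mul,
                integral_Ioi_rpow_of_lt (by norm_num) ht₀pos]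
              rw [show (-2:ℝ) + 1 = -1 by norm_num, Real.rpow_neg_one]
              rw [ht₀def]
              field_simp
              exact (Real.sq_sqrt hM).symm
  have hlc := lintegral_eq_lintegral_meas_lt (volume.restrict E)
    (Filter.Eventually.of_forall hnn) hmble.aemeasurable
  have hor : ENNReal.ofReal (∫ w in E, φ w)
      = ∫⁻ a, ENNReal.ofReal (φ a) ∂(volume.restrict E) :=
    ofReal_integral_eq_lintegral_ofReal hint (Filter.Eventually.of_forall hnn)
  have hfin : ENNReal.ofReal (∫ w in E, φ w) ≤ ENNReal.ofReal (2 * Real.sqrt M) := by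
    rw [hor, hlc]
    refine hsplit.trans ?_
    rw [← ENNReal.ofReal_add ht₀ (Real.sqrt_nonneg M)]
    apply ENNReal.ofReal_le_ofReal
    rw [ht₀def]; ring_nf; exact le_refl _
  exact (ENNReal.ofReal_le_ofReal_iff (by positivity)).mp hfin

lemma holo_g {h : ℂ → ℝ} (hcd : ContDiffOn ℝ (⊤ : ℕ∞) h (ball (0:ℂ) 1))
    (hla : ∀ z ∈ ball (0:ℂ) 1,
      fderiv ℝ (fderiv ℝ h) z 1 1 + fderiv ℝ (fderiv ℝ h) z Complex.I Complex.I = 0)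
    {z : ℂ} (hz : z ∈ ball (0:ℂ) 1) :
    DifferentiableAt ℂ
      (fun w => ((fderiv ℝ h w 1 : ℝ) : ℂ) - ((fderiv ℝ h w Complex.I : ℝ) : ℂ) * Complex.I)
      z := by
  have hCat : ContDiffAt ℝ (⊤ : ℕ∞) h z := hcd.contDiffAt (isOpen_ball.mem_nhds hz)
  have hd1 : ContDiffAt ℝ 1 (fderiv ℝ h) z := hCat.fderiv_right (by rw [one_add_one_eq_two, ← WithTop.coe_ofNat]; exact WithTop.coe_le_coe.mpr le_top)
  have hH : DifferentiableAt ℝ (fderiv ℝ h) z := hd1.differentiableAt one_ne_zero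
  set H := fderiv ℝ (fderiv ℝ h) z with hHdef
  have hHd : HasFDerivAt (fderiv ℝ h) H z := hH.hasFDerivAt
  have hp : HasFDerivAt (fun w => fderiv ℝ h w (1:ℂ))
      ((ContinuousLinearMap.apply ℝ ℝ (1:ℂ)).comp H) z :=
    ((ContinuousLinearMap.apply ℝ ℝ (1:ℂ)).hasFDerivAt).comp z hHd
  have hq : HasFDerivAt (fun w => fderiv ℝ h w (Complex.I))
      ((ContinuousLinearMap.apply ℝ ℝ (Complex.I)).comp H) z :=
    ((ContinuousLinearMap.apply ℝ ℝ (Complex.I)).hasFDerivAt).comp z hHd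
  set G : ℂ →L[ℝ] ℂ :=
    (Complex.ofRealCLM.comp ((ContinuousLinearMap.apply ℝ ℝ (1:ℂ)).comp H)) -
      (((ContinuousLinearMap.mul ℝ ℂ).flip Complex.I).comp
        (Complex.ofRealCLM.comp ((ContinuousLinearMap.apply ℝ ℝ (Complex.I)).comp H))) with hGdef
  have hg : HasFDerivAt
      (fun w => ((fderiv ℝ h w 1 : ℝ) : ℂ) - ((fderiv ℝ h w Complex.I : ℝ) : ℂ) * Complex.I)
      G z := by
    have h1 := (Complex.ofRealCLM.hasFDerivAt).comp z hp
    have h2 := (((ContinuousLinearMap.mul ℝ ℂ).flip Complex.I).hasFDerivAt).comp z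
      ((Complex.ofRealCLM.hasFDerivAt).comp z hq)
    have := h1.sub h2
    convert this using 2 with w
    all_goals rfl
  -- Cauchy-Riemann : G is complex linear
  have hsymm : H Complex.I 1 = H 1 Complex.I :=
    (hCat.isSymmSndFDerivAt (by rw [minSmoothness_of_isRCLikeNormedField, ← WithTop.coe_ofNat]; exact WithTop.coe_le_coe.mpr le_top)) Complex.I 1
  have hharm : H 1 1 + H Complex.I Complex.I = 0 := hla z hz
  set α : ℂ := ((H 1 1 : ℝ) : ℂ) - ((H 1 Complex.I : ℝ) : ℂ) * Complex.I with hα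
  have hrs : (α • (1 : ℂ →L[ℂ] ℂ)).restrictScalars ℝ = G := by
    apply ContinuousLinearMap.ext
    intro w
    have hw : w = w.re • (1:ℂ) + w.im • Complex.I := by
      simp [Complex.real_smul, Complex.re_add_im]
    rw [ContinuousLinearMap.coe_restrictScalars']
    show (α • (1 : ℂ →L[ℂ] ℂ)) w = G w
    rw [hGdef]
    simp only [ContinuousLinearMap.smul_apply, ContinuousLinearMap.one_apply,
      ContinuousLinearMap.sub_apply, ContinuousLinearMap.comp_apply,
      ContinuousLinearMap.apply_apply, ContinuousLinearMap.flip_apply,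
      ContinuousLinearMap.mul_apply', Complex.ofRealCLM_apply]
    rw [hw]
    rw [H.map_add, H.map_smul, H.map_smul]
    simp only [ContinuousLinearMap.add_apply, ContinuousLinearMap.coe_smul',
      Pi.smul_apply]
    have hII : H Complex.I Complex.I = -(H 1 1) := by linarith
    rw [hsymm, hII, hα]
    simp only [smul_eq_mul, Complex.real_smul]
    push_cast
    apply Complex.ext <;> simp <;> ring
  exact ⟨_, hasFDerivAt_of_restrictScalars ℝ hg hrs⟩

/-- Oscillation estimate for harmonic functions on the unit disc with gradient bounded in
weak-L²: `sup_{|z| ≤ 1/2} |h(z) - h(0)| ≤ C (sup_{t>0} t² m({‖∇h‖ ≥ t}))^{1/2}`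
with an absolute constant `C`. -/
theorem stmt11 :
    ∃ C : ℝ, 0 < C ∧
      ∀ h : ℂ → ℝ,
        ContDiffOn ℝ (⊤ : ℕ∞) h (Metric.ball (0 : ℂ) 1) →
        (∀ z ∈ Metric.ball (0 : ℂ) 1, lapC h z = 0) →
        ∀ M : ℝ,
          (∀ t : ℝ, 0 < t →
            ENNReal.ofReal (t ^ 2) *
              volume {z : ℂ | z ∈ Metric.ball (0 : ℂ) 1 ∧ t ≤ ‖fderiv ℝ h z‖} ≤
            ENNReal.ofReal M) →
          ∀ z : ℂ, z ∈ Metric.ball (0 : ℂ) 1 → ‖z‖ ≤ 1 / 2 →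
            |h z - h 0| ≤ C * Real.sqrt M := by
  refine ⟨50, by norm_num, ?_⟩
  intro h hcd hlap M₀ hyp₀ z hz hz2
  -- replace M₀ by max M₀ 0
  set M : ℝ := max M₀ 0 with hMdef
  have hM : 0 ≤ M := le_max_right _ _
  have hsq : Real.sqrt M = Real.sqrt M₀ := by
    rcases le_total 0 M₀ with hc | hc
    · rw [hMdef, max_eq_left hc]
    · rw [hMdef, max_eq_right hc, Real.sqrt_zero]
      exact (Real.sqrt_eq_zero'.mpr hc).symm
  have hyp : ∀ t : ℝ, 0 < t →
      ENNReal.ofReal (t ^ 2) *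
        volume {w : ℂ | w ∈ Metric.ball (0 : ℂ) 1 ∧ t ≤ ‖fderiv ℝ h w‖} ≤
      ENNReal.ofReal M :=
    fun t ht => (hyp₀ t ht).trans (ENNReal.ofReal_le_ofReal (le_max_left _ _))
  rw [← hsq]
  -- harmonicity in terms of fderiv ∘ fderiv
  have hlap' : ∀ w ∈ ball (0:ℂ) 1,
      fderiv ℝ (fderiv ℝ h) w 1 1 + fderiv ℝ (fderiv ℝ h) w Complex.I Complex.I = 0 := by
    intro w hw
    have := hlap w hw
    rw [lapC, iteratedFDeriv_two_apply, iteratedFDeriv_two_apply] at this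
    simpa using this
  set g : ℂ → ℂ := fun w =>
    ((fderiv ℝ h w 1 : ℝ) : ℂ) - ((fderiv ℝ h w Complex.I : ℝ) : ℂ) * Complex.I with hgdef
  have hg : ∀ w ∈ ball (0:ℂ) 1, DifferentiableAt ℂ g w := fun w hw => holo_g hcd hlap' hw
  set φ : ℂ → ℝ := fun w => ‖fderiv ℝ h w‖ with hφdef
  have hφm : Measurable φ := (measurable_fderiv ℝ h).norm
  have hφnn : ∀ w, 0 ≤ φ w := fun w => norm_nonneg _
  have hfc : ContinuousOn (fun w => fderiv ℝ h w) (ball (0:ℂ) 1) :=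
    hcd.continuousOn_fderiv_of_isOpen isOpen_ball (by simp)
  have hφc : ContinuousOn φ (ball (0:ℂ) 1) := hfc.norm
  -- pointwise comparisons between g and the gradient
  have hgb : ∀ w : ℂ, ‖g w‖ ≤ 2 * φ w := by
    intro w
    have h1 : |fderiv ℝ h w 1| ≤ φ w := by
      simpa using (fderiv ℝ h w).le_opNorm 1
    have h2 : |fderiv ℝ h w Complex.I| ≤ φ w := by
      simpa [Complex.norm_I] using (fderiv ℝ h w).le_opNorm Complex.I
    calc ‖g w‖ ≤ ‖((fderiv ℝ h w 1 : ℝ) : ℂ)‖ + ‖((fderiv ℝ h w Complex.I : ℝ) : ℂ) * Complex.I‖ :=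
          norm_sub_le _ _
      _ = |fderiv ℝ h w 1| + |fderiv ℝ h w Complex.I| := by
          simp [Complex.norm_real, Complex.norm_I]
      _ ≤ 2 * φ w := by linarith
  have hLg : ∀ w u : ℂ, |fderiv ℝ h w u| ≤ 2 * ‖u‖ * ‖g w‖ := by
    intro w u
    set L := fderiv ℝ h w with hL
    have hu : u = u.re • (1:ℂ) + u.im • Complex.I := by
      simp [Complex.real_smul, Complex.re_add_im]
    have hre : (g w).re = L 1 := by simp [hgdef, hL]
    have him : (g w).im = -(L Complex.I) := by simp [hgdef, hL]
    have h1 : |L 1| ≤ ‖g w‖ := by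
      rw [← hre]; exact Complex.abs_re_le_norm _
    have h2 : |L Complex.I| ≤ ‖g w‖ := by
      rw [show |L Complex.I| = |(g w).im| by rw [him, abs_neg]]
      exact Complex.abs_im_le_norm _
    have hre' : |u.re| ≤ ‖u‖ := Complex.abs_re_le_norm u
    have him' : |u.im| ≤ ‖u‖ := Complex.abs_im_le_norm u
    calc |L u| = |u.re * L 1 + u.im * L Complex.I| := by
          nth_rewrite 1 [hu]
          rw [L.map_add, L.map_smul, L.map_smul]; simp [smul_eq_mul]
      _ ≤ |u.re| * |L 1| + |u.im| * |L Complex.I| := by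
          refine (abs_add_le _ _).trans ?_; rw [abs_mul, abs_mul]
      _ ≤ 2 * ‖u‖ * ‖g w‖ := by
          have e1 := mul_le_mul hre' h1 (abs_nonneg _) (norm_nonneg u)
          have e2 := mul_le_mul him' h2 (abs_nonneg _) (norm_nonneg u)
          linarith
  -- the key pointwise bound on ‖g c‖ for ‖c‖ ≤ 1/2
  have hkey : ∀ c : ℂ, ‖c‖ ≤ 1/2 → ‖g c‖ ≤ 43 * Real.sqrt M := by
    intro c hc
    have hEsub : closedBall c (1/4) ⊆ ball (0:ℂ) 1 := by
      intro w hw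
      rw [mem_closedBall, dist_eq_norm] at hw
      rw [mem_ball, dist_zero_right]
      calc ‖w‖ = ‖(w - c) + c‖ := by ring_nf
        _ ≤ ‖w - c‖ + ‖c‖ := norm_add_le _ _
        _ < 1 := by linarith
    have hEvol : volume (closedBall c (1/4)) ≤ 1 := by
      rw [Complex.volume_closedBall]
      have hpi4 : (NNReal.pi : ℝ≥0∞) ≤ 4 := by
        have h4 : (NNReal.pi : ℝ≥0) ≤ 4 := by
          rw [← NNReal.coe_le_coe]; push_cast; exact Real.pi_le_four
        exact_mod_cast h4
      calc ENNReal.ofReal (1/4) ^ 2 * NNReal.pi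
          ≤ ENNReal.ofReal (1/4) ^ 2 * 4 := by gcongr
        _ = ENNReal.ofReal ((1/4:ℝ)^2 * 4) := by
            rw [← ENNReal.ofReal_pow (by norm_num), ← ENNReal.ofReal_ofNat 4,
              ← ENNReal.ofReal_mul (by positivity)]
        _ ≤ 1 := by rw [show ((1/4:ℝ)^2 * 4) = 1/4 by norm_num]; exact ENNReal.ofReal_le_one.mpr (by norm_num)
    have hIntφ : IntegrableOn φ (closedBall c (1/4)) :=
      (hφc.mono hEsub).integrableOn_compact (isCompact_closedBall _ _)
    have hi1 : ∫ w in closedBall c (1/4), φ w ≤ 2 * Real.sqrt M :=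
      weakL2_bound hφm hφnn hEsub hEvol hIntφ hM hyp
    have ham := area_mean hg hEsub
    have hgcont : ContinuousOn (fun w => ‖g w‖) (closedBall c (1/4)) := by
      apply ContinuousOn.norm
      exact fun x hx => ((hg x (hEsub hx)).restrictScalars ℝ).continuousAt.continuousWithinAt
    have hIntg : IntegrableOn (fun w => ‖g w‖) (closedBall c (1/4)) :=
      hgcont.integrableOn_compact (isCompact_closedBall _ _)
    have hi2 : ∫ w in closedBall c (1/4), ‖g w‖ ≤ 2 * ∫ w in closedBall c (1/4), φ w := by
      rw [← integral_const_mul]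
      exact setIntegral_mono_on hIntg (hIntφ.const_mul 2) measurableSet_closedBall
        fun w _ => hgb w
    have hπ := Real.pi_gt_three
    have hmm := mul_le_mul_of_nonneg_right hπ.le (norm_nonneg (g c))
    linarith [Real.sqrt_nonneg M]
  -- fundamental theorem of calculus along the segment [0, z]
  have hmem : ∀ s : ℝ, s ∈ Set.uIcc (0:ℝ) 1 → s • z ∈ ball (0:ℂ) 1 := by
    intro s hs
    rw [Set.uIcc_of_le (by norm_num : (0:ℝ) ≤ 1)] at hs
    rw [mem_ball, dist_zero_right, norm_smul, Real.norm_eq_abs,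
      abs_of_nonneg hs.1]
    nlinarith [hs.2, norm_nonneg z]
  have hderiv : ∀ s ∈ Set.uIcc (0:ℝ) 1,
      HasDerivAt (fun s : ℝ => h (s • z)) (fderiv ℝ h (s • z) z) s := by
    intro s hs
    have hdh : DifferentiableAt ℝ h (s • z) :=
      (hcd.contDiffAt (isOpen_ball.mem_nhds (hmem s hs))).differentiableAt (by simp)
    have hin : HasDerivAt (fun s : ℝ => s • z) z s := by
      simpa using (hasDerivAt_id s).smul_const z
    exact hdh.hasFDerivAt.comp_hasDerivAt s hin
  have hcont_int : ContinuousOn (fun s : ℝ => fderiv ℝ h (s • z) z) (Set.uIcc (0:ℝ) 1) := by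
    have h1 : ContinuousOn (fun s : ℝ => fderiv ℝ h (s • z)) (Set.uIcc (0:ℝ) 1) := by
      apply hfc.comp (by fun_prop : Continuous (fun s : ℝ => s • z)).continuousOn
      intro s hs
      exact hmem s hs
    exact (ContinuousLinearMap.apply ℝ ℝ z).continuous.comp_continuousOn h1
  have hFTC := intervalIntegral.integral_eq_sub_of_hasDerivAt hderiv
    (hcont_int.intervalIntegrable)
  simp only [one_smul, zero_smul] at hFTC
  have hbound : ∀ s ∈ Set.uIoc (0:ℝ) 1, ‖fderiv ℝ h (s • z) z‖ ≤ 43 * Real.sqrt M := by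
    intro s hs
    rw [Set.uIoc_of_le (by norm_num : (0:ℝ) ≤ 1)] at hs
    have hsz : ‖s • z‖ ≤ 1/2 := by
      rw [norm_smul, Real.norm_eq_abs, abs_of_nonneg hs.1.le]
      nlinarith [hs.2, norm_nonneg z]
    have h1 := hLg (s • z) z
    have h2 := hkey (s • z) hsz
    rw [Real.norm_eq_abs]
    have h3 : 2 * ‖z‖ * ‖g (s • z)‖ ≤ ‖g (s • z)‖ := by
      nlinarith [mul_nonneg (by linarith : (0:ℝ) ≤ 1 - 2*‖z‖) (norm_nonneg (g (s • z)))]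
    linarith
  have hfin := intervalIntegral.norm_integral_le_of_norm_le_const hbound
  rw [hFTC] at hfin
  simp only [Real.norm_eq_abs] at hfin
  calc |h z - h 0| ≤ 43 * Real.sqrt M * |1 - 0| := hfin
    _ ≤ 50 * Real.sqrt M := by
        rw [show |(1:ℝ) - 0| = 1 by norm_num, mul_one]
        nlinarith [Real.sqrt_nonneg M]
end

section
/- Let ε ∈ (0, 2·arcsinh 1], set φ := arctan(sinh(ε/2)) and l := (2π/ε)(π − 2φ), and define w : A_l → ℝ by w(z) := −ln( |z| · sin((ε/(2π))·ln|z| + π − φ) ), so that e^{2w}·(ε/2π)²·(dx²+dy²) is the hyperbolic collar metric on A_l. Then ‖∇w(z)‖ ≤ 2/|z| for every z ∈ A_l, and consequently sup_{t>0} t² · m({z ∈ A_l : ‖∇w(z)‖ ≥ t}) ≤ 4π, a bound independent of ε. -/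
open MeasureTheory Real

lemma aux_fderiv_norm (a c : ℝ) (z : ℂ) (hz : z ≠ 0)
    (hs : Real.sin (a * Real.log ‖z‖ + c) ≠ 0) :
    ‖fderiv ℝ (fun w : ℂ => -Real.log (‖w‖ * Real.sin (a * Real.log ‖w‖ + c))) z‖
      = |1 + a * (Real.cos (a * Real.log ‖z‖ + c) / Real.sin (a * Real.log ‖z‖ + c))| / ‖z‖ := by
  have hr : ‖z‖ ≠ 0 := norm_ne_zero_iff.2 hz
  have hrpos : (0:ℝ) < ‖z‖ := norm_pos_iff.2 hz
  set r : ℝ := ‖z‖ with hrdef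
  set θ : ℝ := a * Real.log r + c with hθdef
  have hdN : DifferentiableAt ℝ (fun w : ℂ => ‖w‖) z :=
    (contDiffAt_norm ℝ (n := 1) hz).differentiableAt one_ne_zero
  set L : ℂ →L[ℝ] ℝ := fderiv ℝ (fun w : ℂ => ‖w‖) z with hLdef
  have hN : HasFDerivAt (fun w : ℂ => ‖w‖) L z := hdN.hasFDerivAt
  have h1 : HasFDerivAt (fun w : ℂ => Real.log ‖w‖) (r⁻¹ • L) z :=
    (Real.hasDerivAt_log hr).comp_hasFDerivAt (f := fun w : ℂ => ‖w‖) z hN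
  have h2 : HasFDerivAt (fun w : ℂ => a * Real.log ‖w‖ + c) (a • (r⁻¹ • L)) z :=
    (h1.const_mul a).add_const c
  have h3 : HasFDerivAt (fun w : ℂ => Real.sin (a * Real.log ‖w‖ + c))
      (Real.cos θ • (a • (r⁻¹ • L))) z :=
    (Real.hasDerivAt_sin θ).comp_hasFDerivAt (f := fun w : ℂ => a * Real.log ‖w‖ + c) z h2
  have h4 : HasFDerivAt (fun w : ℂ => Real.log (Real.sin (a * Real.log ‖w‖ + c)))
      ((Real.sin θ)⁻¹ • (Real.cos θ • (a • (r⁻¹ • L)))) z :=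
    (Real.hasDerivAt_log hs).comp_hasFDerivAt (f := fun w : ℂ => Real.sin (a * Real.log ‖w‖ + c)) z h3
  have h5 : HasFDerivAt
      (fun w : ℂ => -Real.log ‖w‖ - Real.log (Real.sin (a * Real.log ‖w‖ + c)))
      (-(r⁻¹ • L) - (Real.sin θ)⁻¹ • (Real.cos θ • (a • (r⁻¹ • L)))) z := h1.neg.sub h4
  -- rewrite the derivative as a single scalar multiple of `L`
  have hD : -(r⁻¹ • L) - (Real.sin θ)⁻¹ • (Real.cos θ • (a • (r⁻¹ • L)))
      = (-((1 + a * (Real.cos θ / Real.sin θ)) * r⁻¹)) • L := by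
    rw [smul_smul, smul_smul, smul_smul, ← neg_smul r⁻¹ L, ← sub_smul]
    congr 1
    field_simp
    ring
  rw [hD] at h5
  -- the target function agrees with the above near `z`
  have hev : ∀ᶠ w in nhds z, ‖w‖ ≠ 0 ∧ Real.sin (a * Real.log ‖w‖ + c) ≠ 0 := by
    have hne : ∀ᶠ w : ℂ in nhds z, w ≠ 0 := eventually_ne_nhds hz
    have hcont : ContinuousAt (fun w : ℂ => Real.sin (a * Real.log ‖w‖ + c)) z := by
      exact Real.continuous_sin.continuousAt.comp
        (((continuousAt_const.mul ((Real.continuousAt_log hr).comp (f := fun w : ℂ => ‖w‖)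
          continuous_norm.continuousAt))).add continuousAt_const)
    have hsne := hcont.eventually_ne hs
    filter_upwards [hne, hsne] with w h1 h2
    exact ⟨norm_ne_zero_iff.2 h1, h2⟩
  have heq : (fun w : ℂ => -Real.log (‖w‖ * Real.sin (a * Real.log ‖w‖ + c)))
      =ᶠ[nhds z]
      (fun w : ℂ => -Real.log ‖w‖ - Real.log (Real.sin (a * Real.log ‖w‖ + c))) := by
    filter_upwards [hev] with w hw
    rw [Real.log_mul hw.1 hw.2]
    ring
  have h6 : HasFDerivAt (fun w : ℂ => -Real.log (‖w‖ * Real.sin (a * Real.log ‖w‖ + c)))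
      ((-((1 + a * (Real.cos θ / Real.sin θ)) * r⁻¹)) • L) z :=
    h5.congr_of_eventuallyEq heq
  rw [h6.fderiv, norm_smul, norm_fderiv_norm hdN, mul_one, Real.norm_eq_abs, abs_neg,
    abs_mul, abs_inv, abs_of_pos hrpos]
  exact (div_eq_mul_inv _ _).symm

/-- The logarithm `w(z) = -ln(|z| sin((ε/2π) ln|z| + π - φ))` of the conformal factor of
the hyperbolic collar metric (up to a constant) satisfies `‖∇w‖ ≤ 2/|z|` on `A_l`, hence
its gradient has weak-L² quasinorm squared at most `4π`, independently of `ε`. -/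
theorem stmt13 (ε : ℝ) (hε : ε ∈ Set.Ioc 0 (2 * Real.arsinh 1))
    (φ l : ℝ) (hφ : φ = Real.arctan (Real.sinh (ε / 2)))
    (hl : l = (2 * π / ε) * (π - 2 * φ)) :
    (∀ z ∈ annulus l,
      ‖fderiv ℝ (fun z : ℂ =>
        -Real.log (‖z‖ * Real.sin (ε / (2 * π) * Real.log ‖z‖ + π - φ))) z‖ ≤ 2 / ‖z‖) ∧
    (⨆ (t : ℝ) (_ : 0 < t), ENNReal.ofReal (t ^ 2) *
        volume {z : ℂ | z ∈ annulus l ∧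
          t ≤ ‖fderiv ℝ (fun z : ℂ =>
            -Real.log (‖z‖ * Real.sin (ε / (2 * π) * Real.log ‖z‖ + π - φ))) z‖}) ≤
      ENNReal.ofReal (4 * π) := by
  obtain ⟨hε0, hε1⟩ := hε
  have hπ : (0:ℝ) < π := Real.pi_pos
  set x : ℝ := Real.sinh (ε / 2) with hxdef
  have hx0 : 0 < x := Real.sinh_pos_iff.2 (by linarith)
  have hx1 : x ≤ 1 := by
    calc x ≤ Real.sinh (Real.arsinh 1) := Real.sinh_le_sinh.2 (by linarith)
    _ = 1 := Real.sinh_arsinh 1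
  have hφ0 : 0 < φ := by rw [hφ, ← Real.arctan_zero]; exact Real.arctan_strictMono hx0
  have hφ2 : φ < π / 2 := hφ ▸ Real.arctan_lt_pi_div_two x
  have hsinφ : Real.sin φ = x / Real.sqrt (1 + x ^ 2) := hφ ▸ Real.sin_arctan x
  have hsinφ_pos : 0 < Real.sin φ := Real.sin_pos_of_pos_of_lt_pi hφ0 (by linarith)
  set a : ℝ := ε / (2 * π) with hadef
  have ha0 : 0 < a := by positivity
  have hal : a * l = π - 2 * φ := by
    rw [hl, hadef]; field_simp
  have hεx : ε / 2 < x := Real.self_lt_sinh_iff.2 (by linarith)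
  -- the key coefficient bound
  have hcoef : a * (1 / Real.sin φ) ≤ 1 := by
    have hsq : Real.sqrt (1 + x ^ 2) ≤ Real.sqrt 2 := by
      apply Real.sqrt_le_sqrt; nlinarith
    have h2 : Real.sqrt 2 ≤ 2 := by
      nlinarith [Real.sq_sqrt (show (0:ℝ) ≤ 2 by norm_num), Real.sqrt_nonneg 2]
    have : a * (1 / Real.sin φ) = ε * Real.sqrt (1 + x ^ 2) / (2 * π * x) := by
      rw [hsinφ, hadef]; field_simp; try ring
    rw [this]
    rw [div_le_one (by positivity)]
    have hπ3 : 3 < π := Real.pi_gt_three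
    nlinarith [Real.sqrt_nonneg (1 + x^2)]
  -- the pointwise gradient bound
  have key : ∀ z ∈ annulus l,
      ‖fderiv ℝ (fun z : ℂ =>
        -Real.log (‖z‖ * Real.sin (ε / (2 * π) * Real.log ‖z‖ + π - φ))) z‖ ≤ 2 / ‖z‖ := by
    intro z hz
    obtain ⟨hz1, hz2⟩ := hz
    have hzpos : (0:ℝ) < ‖z‖ := lt_trans (Real.exp_pos _) hz1
    have hzne : z ≠ 0 := norm_pos_iff.mp hzpos
    have hlog1 : -l < Real.log ‖z‖ := by
      have := Real.log_lt_log (Real.exp_pos _) hz1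
      rwa [Real.log_exp] at this
    have hlog2 : Real.log ‖z‖ < 0 := Real.log_neg hzpos hz2
    set θ : ℝ := a * Real.log ‖z‖ + (π - φ) with hθdef
    have hθ1 : φ < θ := by
      have : a * (-l) < a * Real.log ‖z‖ := by
        exact (mul_lt_mul_iff_right₀ ha0).2 hlog1
      have h' : a * (-l) = -(π - 2 * φ) := by rw [← hal]; ring
      rw [h'] at this
      simp only [hθdef]; linarith
    have hθ2 : θ < π - φ := by
      have : a * Real.log ‖z‖ < 0 := mul_neg_of_pos_of_neg ha0 hlog2
      simp only [hθdef]; linarith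
    have hsinθ : Real.sin φ ≤ Real.sin θ := by
      rcases le_total θ (π / 2) with h | h
      · exact Real.sin_le_sin_of_le_of_le_pi_div_two (by linarith) h hθ1.le
      · rw [← Real.sin_pi_sub θ]
        exact Real.sin_le_sin_of_le_of_le_pi_div_two (by linarith) (by linarith) (by linarith)
    have hsθpos : 0 < Real.sin θ := lt_of_lt_of_le hsinφ_pos hsinθ
    -- rewrite the function to match the auxiliary lemma
    have hfun : (fun z : ℂ =>
        -Real.log (‖z‖ * Real.sin (ε / (2 * π) * Real.log ‖z‖ + π - φ)))
        = (fun w : ℂ => -Real.log (‖w‖ * Real.sin (a * Real.log ‖w‖ + (π - φ)))) := by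
      funext w
      rw [hadef, add_sub_assoc]
    rw [hfun, aux_fderiv_norm a (π - φ) z hzne (by rw [← hθdef]; exact hsθpos.ne')]
    rw [← hθdef]
    have hb : |1 + a * (Real.cos θ / Real.sin θ)| ≤ 2 := by
      have h1 : |a * (Real.cos θ / Real.sin θ)| ≤ a * (1 / Real.sin φ) := by
        rw [abs_mul, abs_of_pos ha0, abs_div, abs_of_pos hsθpos]
        exact mul_le_mul_of_nonneg_left
          (div_le_div₀ zero_le_one (Real.abs_cos_le_one θ) hsinφ_pos hsinθ) ha0.le
      calc |1 + a * (Real.cos θ / Real.sin θ)|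
          ≤ |(1:ℝ)| + |a * (Real.cos θ / Real.sin θ)| := abs_add_le _ _
        _ ≤ 1 + a * (1 / Real.sin φ) := by rw [abs_one]; linarith
        _ ≤ 2 := by linarith
    exact (div_le_div_iff_of_pos_right hzpos).2 hb
  refine ⟨key, ?_⟩
  apply iSup_le
  intro t
  apply iSup_le
  intro ht
  have hsub : {z : ℂ | z ∈ annulus l ∧
      t ≤ ‖fderiv ℝ (fun z : ℂ =>
        -Real.log (‖z‖ * Real.sin (ε / (2 * π) * Real.log ‖z‖ + π - φ))) z‖}
      ⊆ Metric.closedBall (0:ℂ) (2 / t) := by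
    intro z hz
    obtain ⟨hza, hzt⟩ := hz
    have hzpos : (0:ℝ) < ‖z‖ := lt_trans (Real.exp_pos _) hza.1
    have h2 : t ≤ 2 / ‖z‖ := le_trans hzt (key z hza)
    have : t * ‖z‖ ≤ 2 := by
      rw [le_div_iff₀ hzpos] at h2; linarith
    rw [Metric.mem_closedBall, dist_zero_right]
    rw [le_div_iff₀ ht]
    linarith [this]
  calc ENNReal.ofReal (t ^ 2) * volume {z : ℂ | z ∈ annulus l ∧
          t ≤ ‖fderiv ℝ (fun z : ℂ =>
            -Real.log (‖z‖ * Real.sin (ε / (2 * π) * Real.log ‖z‖ + π - φ))) z‖}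
      ≤ ENNReal.ofReal (t ^ 2) * volume (Metric.closedBall (0:ℂ) (2 / t)) := by
        exact mul_le_mul_right (measure_mono hsub) _
    _ = ENNReal.ofReal (4 * π) := by
        have hpi : ((NNReal.pi : NNReal) : ENNReal) = ENNReal.ofReal π := by
          rw [← NNReal.coe_real_pi, ENNReal.ofReal_coe_nnreal]
        rw [Complex.volume_closedBall, ← ENNReal.ofReal_pow (by positivity), hpi,
          ← ENNReal.ofReal_mul (by positivity), ← ENNReal.ofReal_mul (by positivity)]
        congr 1
        have ht' : t ≠ 0 := ht.ne'
        field_simp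
        try ring
        try exact Or.inl trivial
end

section
/- For every l > 0, let R_l := (0, 2π) × (−l/2, l/2) ⊆ ℝ² and let μ_l be the measure (2πl)^{−1}·(Lebesgue measure) on R_l, so that (R_l, μ_l) represents the unit-area flat cylinder of modulus l. Define F : R_l → ℝ by F(θ, t) := |t|/√(2πl), which is the intrinsic gradient norm |du_l|_{g_l} of the function u_l(θ,t) = t²/(4πl) solving Δ_{g_l} u_l = 1 for the metric g_l = (2πl)^{−1}(dθ² + dt²). Then sup_{s>0} s² · μ_l({(θ,t) ∈ R_l : F(θ,t) ≥ s}) = l/(54π). In particular the intrinsic weak-L² quasinorm of du_l tends to infinity as l → ∞, even though the pull-back of u_l to the annulus chart A_l has gradient bounded in weak-L² uniformly in l. -/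
open MeasureTheory Real

/-- On the unit-area flat cylinder of modulus `l` (the rectangle `(0,2π)×(-l/2,l/2)` with
measure `(2πl)⁻¹·Lebesgue`), the intrinsic gradient norm `F(θ,t) = |t|/√(2πl)` of the
solution `u_l(θ,t) = t²/(4πl)` of `Δ_{g_l} u_l = 1` has weak-L² quasinorm squared exactly
`l/(54π)`; in particular it blows up as `l → ∞`. -/
theorem stmt14 (l : ℝ) (hl : 0 < l) :
    (⨆ (s : ℝ) (_ : 0 < s), ENNReal.ofReal (s ^ 2) *
        (ENNReal.ofReal ((2 * π * l)⁻¹) *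
          volume {p : ℝ × ℝ |
            p ∈ Set.Ioo 0 (2 * π) ×ˢ Set.Ioo (-(l / 2)) (l / 2) ∧
            s ≤ |p.2| / Real.sqrt (2 * π * l)})) =
      ENNReal.ofReal (l / (54 * π)) := by
  set c := Real.sqrt (2 * π * l) with hc
  have hπ : 0 < π := Real.pi_pos
  have h2πl : 0 < 2 * π * l := by positivity
  have hcpos : 0 < c := Real.sqrt_pos.mpr h2πl
  have hc2 : c ^ 2 = 2 * π * l := Real.sq_sqrt h2πl.le
  -- volume computation
  have hvol : ∀ s : ℝ, 0 < s →
      volume {p : ℝ × ℝ |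
            p ∈ Set.Ioo 0 (2 * π) ×ˢ Set.Ioo (-(l / 2)) (l / 2) ∧
            s ≤ |p.2| / c} =
      ENNReal.ofReal (2 * π) * ENNReal.ofReal (2 * (l / 2 - s * c)) := by
    intro s hs
    have hsc : 0 < s * c := by positivity
    have hset : {p : ℝ × ℝ |
            p ∈ Set.Ioo 0 (2 * π) ×ˢ Set.Ioo (-(l / 2)) (l / 2) ∧
            s ≤ |p.2| / c} =
        Set.Ioo 0 (2 * π) ×ˢ
          (Set.Ioc (-(l / 2)) (-(s * c)) ∪ Set.Ico (s * c) (l / 2)) := by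
      ext ⟨x, t⟩
      simp only [Set.mem_setOf_eq, Set.mem_prod, Set.mem_Ioo, Set.mem_union,
        Set.mem_Ioc, Set.mem_Ico]
      constructor
      · rintro ⟨⟨hx, ht1, ht2⟩, hst⟩
        rw [le_div_iff₀ hcpos] at hst
        refine ⟨hx, ?_⟩
        rcases le_or_gt 0 t with h | h
        · right; exact ⟨by rwa [abs_of_nonneg h] at hst, ht2⟩
        · left; refine ⟨ht1, ?_⟩
          rw [abs_of_neg h] at hst; linarith
      · rintro ⟨hx, ht⟩
        rcases ht with ⟨h1, h2⟩ | ⟨h1, h2⟩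
        · have ht0 : t < 0 := by nlinarith
          refine ⟨⟨hx, h1, by nlinarith⟩, ?_⟩
          rw [le_div_iff₀ hcpos, abs_of_neg ht0]; linarith
        · have ht0 : 0 < t := by nlinarith
          refine ⟨⟨hx, by nlinarith, h2⟩, ?_⟩
          rw [le_div_iff₀ hcpos, abs_of_pos ht0]; linarith
    rw [hset, Measure.volume_eq_prod, Measure.prod_prod]
    congr 1
    · rw [Real.volume_Ioo]; congr 1; ring
    · have hdisj : Disjoint (Set.Ioc (-(l / 2)) (-(s * c))) (Set.Ico (s * c) (l / 2)) := by
        rw [Set.disjoint_left]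
        rintro t ⟨_, h2⟩ ⟨h3, _⟩
        linarith
      rw [measure_union hdisj measurableSet_Ico, Real.volume_Ioc, Real.volume_Ico]
      have : -(s * c) - -(l / 2) = l / 2 - s * c := by ring
      rw [this]
      rcases le_or_gt 0 (l / 2 - s * c) with h | h
      · rw [← ENNReal.ofReal_add h h]; congr 1; ring
      · rw [ENNReal.ofReal_of_nonpos h.le, ENNReal.ofReal_of_nonpos (by linarith)]
        simp
  have hterm : ∀ s : ℝ,
      ENNReal.ofReal (s ^ 2) * (ENNReal.ofReal ((2 * π * l)⁻¹) *
        (ENNReal.ofReal (2 * π) * ENNReal.ofReal (2 * (l / 2 - s * c)))) =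
      ENNReal.ofReal (s ^ 2 * ((2 * π * l)⁻¹ * (2 * π * (2 * (l / 2 - s * c))))) := by
    intro s
    rw [← ENNReal.ofReal_mul (le_of_lt (by positivity : (0:ℝ) < 2 * π)),
        ← ENNReal.ofReal_mul (le_of_lt (by positivity : (0:ℝ) < (2 * π * l)⁻¹)),
        ← ENNReal.ofReal_mul (sq_nonneg s)]
  apply le_antisymm
  · apply iSup_le; intro s; apply iSup_le; intro hs
    rw [hvol s hs, hterm s]
    apply ENNReal.ofReal_le_ofReal
    have h1 : s ^ 2 * ((2 * π * l)⁻¹ * (2 * π * (2 * (l / 2 - s * c)))) =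
        s ^ 2 * (l - 2 * s * c) / l := by
      field_simp
    rw [h1, div_le_div_iff₀ hl (by positivity : (0:ℝ) < 54 * π)]
    nlinarith [mul_nonneg (sq_nonneg (3 * c * s - l)) (by positivity : (0:ℝ) ≤ 6 * c * s + l),
      hc2, mul_pos hπ hl, sq_nonneg s, hcpos.le]
  · have hs0 : 0 < l / (3 * c) := by positivity
    apply le_iSup_of_le (l / (3 * c))
    rw [iSup_pos hs0, hvol _ hs0, hterm]
    apply le_of_eq
    congr 1
    have hc0 : c ≠ 0 := ne_of_gt hcpos
    have hl3 : l / (3 * c) * c = l / 3 := by field_simp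
    rw [hl3]
    have hπ0 : π ≠ 0 := ne_of_gt hπ
    field_simp
    linear_combination 27 * hc2
end
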